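/- arXiv:1804.07232 — 6 statements merged into one kernel-verified Lean document; each statement's English description precedes it below -/
import Mathlib

section
/- Let X = {x1,...,x5}. Define three 3-state characters on X: χ1 = x1x2|x3x4|x5, χ2 = x1x5|x2x4|x3, χ3 = x1|x2x3|x4x5. Then every pair of these characters is compatible (admits a perfect phylogeny), but the set {χ1, χ2, χ3} is incompatible. -/
/-!
Each pair of characters is displayed by a caterpillar on which both extend to colourings of all
vertices with connected colour classes; in a tree such a class contains the path between any two of
its vertices, so the subtrees spanned by distinct states are disjoint.

Conversely, if a tree displays a character with `a, b` in one state and `c, d` in another, the paths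
`a – b` and `c – d` are disjoint, which in the path metric means the quartet split `ab|cd`:
`d(a,b) + d(c,d) < d(a,c) + d(b,d) = d(a,d) + d(b,c)`. The three characters force the splits
`12|34`, `15|24` and `23|45`, which contradict the four-point condition of the tree metric.
-/

namespace PP

/-- A vertex is a leaf (degree at most one) if it has at most one neighbour. -/
def IsLeafVert {V : Type} (G : SimpleGraph V) (w : V) : Prop :=
  ∀ w₁ w₂ : V, G.Adj w w₁ → G.Adj w w₂ → w₁ = w₂

/-- A (finite, unrooted) phylogenetic tree on a label set `X ⊆ L`:
its leaves are bijectively labelled by the elements of `X`. -/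
structure PhyloTree {L : Type} (X : Set L) where
  V : Type
  finV : Finite V
  G : SimpleGraph V
  isTree : G.IsTree
  leaf : L → V
  leaf_injOn : Set.InjOn leaf X
  leaf_isLeaf : ∀ x ∈ X, IsLeafVert G (leaf x)
  leaf_surj : ∀ w, IsLeafVert G w → ∃ x ∈ X, leaf x = w

/-- The vertex set of the minimal subtree `T[S]` spanning the leaves labelled by `S ∩ X`. -/
def subtree {L : Type} {X : Set L} (T : PhyloTree X) (S : Set L) : Set T.V :=
  {w | ∃ x ∈ S ∩ X, ∃ y ∈ S ∩ X,
        ∃ p : T.G.Walk (T.leaf x) (T.leaf y), p.IsPath ∧ w ∈ p.support}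

/-- `T` displays the character `χ` (a state assignment, whose nonempty fibres on `X`
are the states) if the minimal subtrees spanning distinct states are vertex-disjoint. -/
def displays {L : Type} {X : Set L} (T : PhyloTree X) (χ : L → ℕ) : Prop :=
  ∀ s t : ℕ, s ≠ t → Disjoint (subtree T {x | χ x = s}) (subtree T {x | χ x = t})

/-- A set of characters is compatible if some tree on `X` displays all of them. -/
def compatible {L : Type} (X : Set L) (C : Set (L → ℕ)) : Prop :=
  ∃ T : PhyloTree X, ∀ χ ∈ C, displays T χ

/-- X = {x₁,…,x₅}, labelled by 1,…,5. -/
def X5 : Set ℕ := {x | 1 ≤ x ∧ x ≤ 5}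

/-- χ₁ = x₁x₂ | x₃x₄ | x₅ -/
def chi1 : ℕ → ℕ := fun x => if x ≤ 2 then 0 else if x ≤ 4 then 1 else 2

/-- χ₂ = x₁x₅ | x₂x₄ | x₃ -/
def chi2 : ℕ → ℕ := fun x => if x = 3 then 2 else if x = 2 ∨ x = 4 then 1 else 0

/-- χ₃ = x₁ | x₂x₃ | x₄x₅ -/
def chi3 : ℕ → ℕ := fun x => if x = 1 then 0 else if x ≤ 3 then 1 else 2

end PP

namespace SimpleGraph

variable {V : Type*} {G : SimpleGraph V} {a b c d u v w : V}

theorem Walk.IsPath.append_of_support_inter {p : G.Walk u w} {q : G.Walk w v} (hp : p.IsPath)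
    (hq : q.IsPath) (h : ∀ x ∈ p.support, x ∈ q.support → x = w) : (p.append q).IsPath := by
  have hq' := hq.support_nodup
  rw [← q.cons_tail_support, List.nodup_cons] at hq'
  rw [Walk.isPath_def, Walk.support_append]
  refine hp.support_nodup.append hq'.2 fun x hxp hxq => ?_
  obtain rfl := h x hxp (q.cons_tail_support ▸ List.mem_cons_of_mem _ hxq)
  exact hq'.1 hxq

theorem IsAcyclic.eq_of_isPath (hG : G.IsAcyclic) {p q : G.Walk u v} (hp : p.IsPath)
    (hq : q.IsPath) : p = q :=
  congrArg Subtype.val ((hG.subsingleton_path u v).elim ⟨p, hp⟩ ⟨q, hq⟩)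

theorem IsAcyclic.support_subset_of_isPath (hG : G.IsAcyclic) {p : G.Walk u v} (hp : p.IsPath)
    (q : G.Walk u v) : p.support ⊆ q.support := by
  classical
  exact hG.eq_of_isPath hp q.bypass_isPath ▸ q.support_bypass_subset_support

theorem IsAcyclic.mem_of_mem_support_of_induce_preconnected (hG : G.IsAcyclic) {K : Set V}
    (hK : (G.induce K).Preconnected) (hu : u ∈ K) (hv : v ∈ K) {p : G.Walk u v}
    (hp : p.IsPath) (hw : w ∈ p.support) : w ∈ K := by
  classical
  obtain ⟨q⟩ := hK ⟨u, hu⟩ ⟨v, hv⟩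
  have hw' : w ∈ (q.map (Embedding.induce K).toHom).support :=
    hG.support_subset_of_isPath hp _ hw
  rw [Walk.support_map, List.mem_map] at hw'
  obtain ⟨x, -, rfl⟩ := hw'
  exact x.2

theorem IsAcyclic.length_eq_dist (hG : G.IsAcyclic) {p : G.Walk u v} (hp : p.IsPath) :
    p.length = G.dist u v := by
  obtain ⟨q, hq, hql⟩ := p.reachable.exists_path_of_dist
  rwa [hG.eq_of_isPath hp hq]

theorem IsAcyclic.dist_add_dist_of_mem_support (hG : G.IsAcyclic) {p : G.Walk u v}
    (hp : p.IsPath) (hw : w ∈ p.support) : G.dist u w + G.dist w v = G.dist u v := by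
  classical
  rw [← hG.length_eq_dist (hp.takeUntil hw), ← hG.length_eq_dist (hp.dropUntil hw),
    ← hG.length_eq_dist hp, ← Walk.length_append, p.take_spec hw]

theorem IsTree.mem_support_iff_dist_add_dist (hG : G.IsTree) {p : G.Walk u v} (hp : p.IsPath) :
    w ∈ p.support ↔ G.dist u w + G.dist w v = G.dist u v := by
  refine ⟨hG.isAcyclic.dist_add_dist_of_mem_support hp, fun h => ?_⟩
  obtain ⟨r, -, hr⟩ := hG.connected.exists_path_of_dist u w
  obtain ⟨s, -, hs⟩ := hG.connected.exists_path_of_dist w v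
  have hrs : (r.append s).IsPath :=
    (r.append s).isPath_of_length_eq_dist (by rw [Walk.length_append, hr, hs, h])
  rw [hG.isAcyclic.eq_of_isPath hp hrs, Walk.mem_support_append_iff]
  exact Or.inl r.end_mem_support

theorem IsAcyclic.dist_add_dist_or_of_mem_support (hG : G.IsAcyclic) {p : G.Walk u v}
    (hp : p.IsPath) {m m' : V} (hm : m ∈ p.support) (hm' : m' ∈ p.support) :
    G.dist u m + G.dist m m' = G.dist u m' ∨ G.dist u m' + G.dist m' m = G.dist u m := by
  classical
  have h₁ := hG.dist_add_dist_of_mem_support hp hm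
  have h₂ := hG.dist_add_dist_of_mem_support hp hm'
  rw [← p.take_spec hm', Walk.mem_support_append_iff] at hm
  refine hm.imp (hG.dist_add_dist_of_mem_support (hp.takeUntil hm')) fun hm => ?_
  have := hG.dist_add_dist_of_mem_support (hp.dropUntil hm') hm
  omega

theorem IsTree.exists_median (hG : G.IsTree) (a b c : V) :
    ∃ m, G.dist a m + G.dist m b = G.dist a b ∧ G.dist b m + G.dist m c = G.dist b c ∧
      G.dist a m + G.dist m c = G.dist a c := by
  classical
  obtain ⟨q, hq, -⟩ := hG.connected.exists_path_of_dist b c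
  obtain ⟨m, hm, hmin⟩ := q.support.toFinset.exists_min_image (G.dist a)
    ⟨b, List.mem_toFinset.mpr q.start_mem_support⟩
  rw [List.mem_toFinset] at hm
  obtain ⟨r, hr, -⟩ := hG.connected.exists_path_of_dist a m
  -- `m` is the point of `q` closest to `a`, so the path from `a` to `m` meets `q` only at `m`.
  have hrq : ∀ x ∈ r.support, x ∈ q.support → x = m := fun x hxr hxq => by
    have := hG.isAcyclic.dist_add_dist_of_mem_support hr hxr
    have := hmin x (List.mem_toFinset.mpr hxq)
    exact hG.connected.dist_eq_zero_iff.mp (by omega)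
  have hend : ∀ {x} (s : G.Walk m x), m ∈ (r.append s).support := fun s =>
    (Walk.mem_support_append_iff r s).mpr (Or.inl r.end_mem_support)
  refine ⟨m, ?_, hG.isAcyclic.dist_add_dist_of_mem_support hq hm, ?_⟩
  · refine hG.isAcyclic.dist_add_dist_of_mem_support (hr.append_of_support_inter
      (hq.takeUntil hm).reverse fun x hxr hxt => hrq x hxr ?_) (hend _)
    exact q.support_takeUntil_subset_support hm (by simpa using hxt)
  · exact hG.isAcyclic.dist_add_dist_of_mem_support (hr.append_of_support_inter (hq.dropUntil hm)
      fun x hxr hxd => hrq x hxr (q.support_dropUntil_subset_support hm hxd)) (hend _)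

theorem IsTree.exists_dist_add_le_max (hG : G.IsTree) (a b c d : V) :
    ∃ m, G.dist a m + G.dist m b = G.dist a b ∧
      G.dist a b + (G.dist c m + G.dist m d) ≤
        max (G.dist a c + G.dist b d) (G.dist a d + G.dist b c) := by
  -- `m` and `m'` are where `c` and `d` attach to the path from `a` to `b`.
  obtain ⟨m, hab, hbc, hac⟩ := hG.exists_median a b c
  obtain ⟨m', hab', hbd, had⟩ := hG.exists_median a b d
  obtain ⟨p, hp, -⟩ := hG.connected.exists_path_of_dist a b
  have hm := (hG.mem_support_iff_dist_add_dist hp).mpr hab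
  have hm' := (hG.mem_support_iff_dist_add_dist hp).mpr hab'
  have := hG.connected.dist_triangle (u := m) (v := m') (w := d)
  refine ⟨m, hab, ?_⟩
  rcases hG.isAcyclic.dist_add_dist_or_of_mem_support hp hm hm' with h | h <;> grind [dist_comm]

theorem IsTree.four_point (hG : G.IsTree) (a b c d : V) :
    G.dist a b + G.dist c d ≤ max (G.dist a c + G.dist b d) (G.dist a d + G.dist b c) := by
  obtain ⟨m, -, hm⟩ := hG.exists_dist_add_le_max a b c d
  have := hG.connected.dist_triangle (u := c) (v := m) (w := d)
  omega

/-- The quartet `ab|cd` in the four-point form of the path metric. -/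
def IsQuartetSplit (G : SimpleGraph V) (a b c d : V) : Prop :=
  G.dist a b + G.dist c d < G.dist a c + G.dist b d ∧
    G.dist a c + G.dist b d = G.dist a d + G.dist b c

theorem IsTree.isQuartetSplit_of_disjoint (hG : G.IsTree) {p : G.Walk a b} {q : G.Walk c d}
    (hp : p.IsPath) (hq : q.IsPath) (hpq : p.support.Disjoint q.support) :
    G.IsQuartetSplit a b c d := by
  obtain ⟨m, hm, hle⟩ := hG.exists_dist_add_le_max a b c d
  have hlt : G.dist c d < G.dist c m + G.dist m d :=
    hG.connected.dist_triangle.lt_of_ne fun h => hpq ((hG.mem_support_iff_dist_add_dist hp).mpr hm)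
      ((hG.mem_support_iff_dist_add_dist hq).mpr h.symm)
  have := hG.four_point a c b d
  have := hG.four_point a d b c
  unfold IsQuartetSplit
  grind [dist_comm]

theorem IsTree.not_isQuartetSplit_fitch (hG : G.IsTree) (x₁ x₂ x₃ x₄ x₅ : V) :
    ¬ (G.IsQuartetSplit x₁ x₂ x₃ x₄ ∧ G.IsQuartetSplit x₁ x₅ x₂ x₄ ∧
      G.IsQuartetSplit x₂ x₃ x₄ x₅) := by
  rintro ⟨h₁, h₂, h₃⟩
  have := hG.four_point x₁ x₂ x₃ x₅
  have := hG.four_point x₁ x₃ x₂ x₅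
  unfold IsQuartetSplit at *
  grind [dist_comm]

end SimpleGraph

namespace PP

open SimpleGraph

theorem displays_of_induce_preconnected {L : Type} {X : Set L} (T : PhyloTree X) {χ : L → ℕ}
    (c : T.V → ℕ) (hc : ∀ x ∈ X, c (T.leaf x) = χ x)
    (hconn : ∀ u, (T.G.induce {v | c v = c u}).Preconnected) : displays T χ := by
  have hcol : ∀ s w, w ∈ subtree T {x | χ x = s} → c w = s := by
    rintro s w ⟨x, ⟨rfl, hx⟩, y, ⟨hy, hyX⟩, p, hp, hw⟩
    rw [← hc x hx]
    refine T.isTree.isAcyclic.mem_of_mem_support_of_induce_preconnected (hconn (T.leaf x)) rfl ?_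
      hp hw
    change c (T.leaf y) = c (T.leaf x)
    rw [hc y hyX, hc x hx, hy]
  intro s t hst
  exact Set.disjoint_left.mpr fun w hs ht => hst ((hcol s w hs).symm.trans (hcol t w ht))

theorem displays.isQuartetSplit {L : Type} {X : Set L} {T : PhyloTree X} {χ : L → ℕ}
    (hχ : displays T χ) {a b c d : L} (ha : a ∈ X) (hb : b ∈ X) (hc : c ∈ X) (hd : d ∈ X)
    (hab : χ a = χ b) (hcd : χ c = χ d) (hac : χ a ≠ χ c) :
    T.G.IsQuartetSplit (T.leaf a) (T.leaf b) (T.leaf c) (T.leaf d) := by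
  obtain ⟨p, hp, -⟩ := T.isTree.connected.exists_path_of_dist (T.leaf a) (T.leaf b)
  obtain ⟨q, hq, -⟩ := T.isTree.connected.exists_path_of_dist (T.leaf c) (T.leaf d)
  refine T.isTree.isQuartetSplit_of_disjoint hp hq fun w hwp hwq => ?_
  exact Set.disjoint_left.mp (hχ _ _ hac) ⟨a, ⟨rfl, ha⟩, b, ⟨hab.symm, hb⟩, p, hp, hwp⟩
    ⟨c, ⟨rfl, hc⟩, d, ⟨hcd.symm, hd⟩, q, hq, hwq⟩

theorem compatible_pair_of_displays {L : Type} {X : Set L} (T : PhyloTree X) {χ ψ : L → ℕ}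
    (hχ : displays T χ) (hψ : displays T ψ) : compatible X {χ, ψ} :=
  ⟨T, by rintro _ (rfl | rfl); exacts [hχ, hψ]⟩

theorem not_compatible_chi1_chi2_chi3 : ¬ compatible X5 {chi1, chi2, chi3} := by
  rintro ⟨T, hT⟩
  refine T.isTree.not_isQuartetSplit_fitch (T.leaf 1) (T.leaf 2) (T.leaf 3) (T.leaf 4) (T.leaf 5)
    ⟨(hT chi1 (by simp)).isQuartetSplit ?_ ?_ ?_ ?_ (by decide) (by decide) (by decide),
      (hT chi2 (by simp)).isQuartetSplit ?_ ?_ ?_ ?_ (by decide) (by decide) (by decide),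
      (hT chi3 (by simp)).isQuartetSplit ?_ ?_ ?_ ?_ (by decide) (by decide) (by decide)⟩ <;>
  norm_num [X5]

def caterpillarEdges : Finset (Sym2 (Fin 8)) :=
  {s(0, 5), s(1, 5), s(5, 6), s(2, 6), s(6, 7), s(3, 7), s(4, 7)}

-- The leaves are `0, …, 4` and the spine is `5 - 6 - 7`.
def caterpillar : SimpleGraph (Fin 8) := fromEdgeSet caterpillarEdges

instance : DecidableRel caterpillar.Adj := fun u v =>
  inferInstanceAs (Decidable (s(u, v) ∈ caterpillarEdges ∧ u ≠ v))

theorem caterpillar_isTree : caterpillar.IsTree := by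
  rw [isTree_iff_connected_and_card, Nat.card_eq_fintype_card, Nat.card_eq_fintype_card]
  exact ⟨by decide +kernel, by decide +kernel⟩

theorem isLeafVert_caterpillar_iff (w : Fin 8) : IsLeafVert caterpillar w ↔ (w : ℕ) < 5 := by
  unfold IsLeafVert
  revert w
  decide

theorem mem_X5_iff_mem_of_perm {labels : List ℕ} (h : labels.Perm [1, 2, 3, 4, 5]) {x : ℕ} :
    x ∈ X5 ↔ x ∈ labels := by
  rw [h.mem_iff]
  simp only [X5, Set.mem_ofPred_eq, List.mem_cons, List.not_mem_nil, or_false]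
  omega

theorem idxOf_lt_of_mem_X5 {labels : List ℕ} (h : labels.Perm [1, 2, 3, 4, 5]) {x : ℕ}
    (hx : x ∈ X5) : labels.idxOf x < 5 :=
  (List.idxOf_lt_length_of_mem ((mem_X5_iff_mem_of_perm h).mp hx)).trans_eq h.length_eq

-- Leaf `i` carries the label `labels[i]`, so `caterpillarTree [a, b, c, d, e] _` is the tree
-- `x_a x_b | x_c | x_d x_e`.
def caterpillarTree (labels : List ℕ) (h : labels.Perm [1, 2, 3, 4, 5]) : PhyloTree X5 where
  V := Fin 8
  finV := inferInstance
  G := caterpillar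
  isTree := caterpillar_isTree
  leaf x := Fin.ofNat 8 (labels.idxOf x)
  leaf_injOn x hx y hy hxy := by
    have hx5 := idxOf_lt_of_mem_X5 h hx
    have hy5 := idxOf_lt_of_mem_X5 h hy
    rw [Fin.ext_iff, Fin.val_ofNat, Fin.val_ofNat, Nat.mod_eq_of_lt (by omega),
      Nat.mod_eq_of_lt (by omega)] at hxy
    exact (List.idxOf_inj ((mem_X5_iff_mem_of_perm h).mp hx)).mp hxy
  leaf_isLeaf x hx := by
    have hx5 := idxOf_lt_of_mem_X5 h hx
    rwa [isLeafVert_caterpillar_iff, Fin.val_ofNat, Nat.mod_eq_of_lt (by omega)]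
  leaf_surj w hw := by
    rw [isLeafVert_caterpillar_iff] at hw
    have hw' : (w : ℕ) < labels.length := h.length_eq ▸ hw
    refine ⟨labels[(w : ℕ)], (mem_X5_iff_mem_of_perm h).mpr (List.getElem_mem hw'), ?_⟩
    rw [h.nodup_iff.mpr (by decide) |>.idxOf_getElem]
    simp

def caterpillarColouring (labels : List ℕ) (χ : ℕ → ℕ) (spine : List ℕ) (v : Fin 8) :
    ℕ :=
  if (v : ℕ) < 5 then χ (labels.getD v 0) else spine.getD (v - 5) 0

theorem caterpillarTree_displays {labels : List ℕ} (h : labels.Perm [1, 2, 3, 4, 5])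
    (χ : ℕ → ℕ) (spine : List ℕ)
    (hconn : ∀ u, (caterpillar.induce {v | caterpillarColouring labels χ spine v =
      caterpillarColouring labels χ spine u}).Preconnected) :
    displays (caterpillarTree labels h) χ := by
  refine displays_of_induce_preconnected _ (caterpillarColouring labels χ spine) (fun x hx => ?_)
    hconn
  have hx5 := idxOf_lt_of_mem_X5 h hx
  have hx' := (mem_X5_iff_mem_of_perm h).mp hx
  have hlt := List.idxOf_lt_length_of_mem hx'
  simp only [caterpillarTree, caterpillarColouring, Fin.val_ofNat,
    Nat.mod_eq_of_lt (show labels.idxOf x < 8 by omega), if_pos hx5,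
    List.getD_eq_getElem _ _ hlt, List.getElem_idxOf]

theorem fitch_example :
    compatible X5 {chi1, chi2} ∧ compatible X5 {chi1, chi3} ∧ compatible X5 {chi2, chi3} ∧
    ¬ compatible X5 {chi1, chi2, chi3} :=
  ⟨compatible_pair_of_displays (caterpillarTree [1, 5, 2, 3, 4] (by decide))
      (caterpillarTree_displays _ chi1 [0, 0, 1] (by decide +kernel))
      (caterpillarTree_displays _ chi2 [0, 1, 1] (by decide +kernel)),
    compatible_pair_of_displays (caterpillarTree [1, 2, 3, 4, 5] (by decide))
      (caterpillarTree_displays _ chi1 [0, 1, 1] (by decide +kernel))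
      (caterpillarTree_displays _ chi3 [1, 1, 2] (by decide +kernel)),
    compatible_pair_of_displays (caterpillarTree [1, 5, 4, 2, 3] (by decide))
      (caterpillarTree_displays _ chi2 [0, 1, 1] (by decide +kernel))
      (caterpillarTree_displays _ chi3 [2, 2, 1] (by decide +kernel)),
    not_compatible_chi1_chi2_chi3⟩

end PP
end

section
/- Let X = {a1,a2,a3,a4,b1,b2,b3,b4} and define the characters Ω_A = a1b1b2|a2a3b3a4b4, χ2 = a1|b1|a2a3|b2b3|a4|b4, φ3 = a1a2|b1|b2|a3|a4|b3b4, Ω_B = a1b1a2b2b3|a3a4b4. Then the set {Ω_A, χ2, φ3, Ω_B} is incompatible: no tree on X displays all four characters. -/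
namespace PP

/-- Labels: `(false, i)` is `aᵢ`, `(true, i)` is `bᵢ`. -/
abbrev Lbl : Type := Bool × ℕ

def a (i : ℕ) : Lbl := (false, i)
def b (i : ℕ) : Lbl := (true, i)

/-- `X = {a₁,…,aₙ,b₁,…,bₙ}`. -/
def Xset (n : ℕ) : Set Lbl := {p | 1 ≤ p.2 ∧ p.2 ≤ n}

/-- `X_{≤ i} = {aⱼ, bⱼ : 1 ≤ j ≤ i}`. -/
def XLE (i : ℕ) : Set Lbl := {p | 1 ≤ p.2 ∧ p.2 ≤ i}

/-- χ_j = X_{≤j-2} | a_{j-1} | b_{j-1} | a_j a_{j+1} | b_j b_{j+1} | a_{j+2} | b_{j+2} | X_{≥j+3} -/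
def chi (j : ℕ) : Lbl → ℕ := fun p =>
  if p.2 + 2 ≤ j then 0
  else if p.2 + 1 = j then cond p.1 2 1
  else if p.2 ≤ j + 1 then cond p.1 4 3
  else if p.2 = j + 2 then cond p.1 6 5
  else 7

def phiMain (j i : ℕ) : ℕ :=
  if i < j then 0 else if i = j then 3 else if i = j + 1 then 4 else 5

def phiSide (j i : ℕ) : ℕ :=
  if i + 3 ≤ j then 0 else if i + 2 = j then 1 else if i + 1 = j then 2 else 5

/-- For even j: φ_j = X_{≤j-3}∪{b_{j-2},b_{j-1}} | a_{j-2} | a_{j-1} | b_j | b_{j+1} | {a_j,a_{j+1}}∪X_{≥j+2};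
for odd j the roles of a and b are swapped. -/
def phi (j : ℕ) : Lbl → ℕ := fun p =>
  if j % 2 = 0 then cond p.1 (phiMain j p.2) (phiSide j p.2)
  else cond p.1 (phiSide j p.2) (phiMain j p.2)

/-- Ω_A = a₁b₁b₂ | {a₂} ∪ X_{≥3}. -/
def OmA : Lbl → ℕ := fun p =>
  cond p.1 (if p.2 ≤ 2 then 0 else 1) (if p.2 = 1 then 0 else 1)

/-- Ω_B = X_{≤n-2} ∪ {b_{n-1}} | a_{n-1} aₙ bₙ. -/
def OmB (n : ℕ) : Lbl → ℕ := fun p =>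
  cond p.1 (if p.2 = n then 1 else 0) (if p.2 + 1 ≥ n then 1 else 0)


section TreeLemmas

open SimpleGraph

variable {V : Type} {G : SimpleGraph V}

/-- The unique path between two vertices of a tree. -/
noncomputable def tpath (hG : G.IsTree) (x y : V) : G.Walk x y :=
  (hG.existsUnique_path x y).choose

lemma tpath_isPath (hG : G.IsTree) (x y : V) : (tpath hG x y).IsPath :=
  (hG.existsUnique_path x y).choose_spec.1

lemma tpath_unique (hG : G.IsTree) {x y : V} (p : G.Walk x y) (hp : p.IsPath) :
    p = tpath hG x y :=
  (hG.existsUnique_path x y).choose_spec.2 p hp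

/-- The vertex set of the tree path between `x` and `y`. -/
def pset (hG : G.IsTree) (x y : V) : Set V := {v | v ∈ (tpath hG x y).support}

lemma left_mem_pset (hG : G.IsTree) (x y : V) : x ∈ pset hG x y :=
  (tpath hG x y).start_mem_support

lemma right_mem_pset (hG : G.IsTree) (x y : V) : y ∈ pset hG x y :=
  (tpath hG x y).end_mem_support

lemma pset_symm (hG : G.IsTree) (x y : V) : pset hG x y = pset hG y x := by
  have h : (tpath hG x y).reverse = tpath hG y x :=
    tpath_unique hG _ (tpath_isPath hG x y).reverse
  ext u
  simp only [pset, Set.mem_setOf_eq, ← h, Walk.support_reverse, List.mem_reverse]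

lemma pset_split (hG : G.IsTree) {x y v : V} (hv : v ∈ pset hG x y) :
    pset hG x y = pset hG x v ∪ pset hG v y := by
  classical
  set p := tpath hG x y with hp
  have hv' : v ∈ p.support := hv
  have h1 : p.takeUntil v hv' = tpath hG x v :=
    tpath_unique hG _ ((tpath_isPath hG x y).takeUntil hv')
  have h2 : p.dropUntil v hv' = tpath hG v y :=
    tpath_unique hG _ ((tpath_isPath hG x y).dropUntil hv')
  ext u
  have h3 : u ∈ p.support ↔ u ∈ (p.takeUntil v hv').support ∨ u ∈ (p.dropUntil v hv').support := by
    conv_lhs => rw [← p.take_spec hv']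
    exact Walk.mem_support_append_iff _ _
  simp only [pset, Set.mem_setOf_eq, Set.mem_union, ← h1, ← h2]
  exact h3

lemma pset_sub_left (hG : G.IsTree) {x y v : V} (hv : v ∈ pset hG x y) :
    pset hG x v ⊆ pset hG x y := by
  rw [pset_split hG hv]; exact Set.subset_union_left

lemma pset_sub_right (hG : G.IsTree) {x y v : V} (hv : v ∈ pset hG x y) :
    pset hG v y ⊆ pset hG x y := by
  rw [pset_split hG hv]; exact Set.subset_union_right

lemma append_isPath {x m y : V} {p : G.Walk x m} {q : G.Walk m y}
    (hp : p.IsPath) (hq : q.IsPath)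
    (h : ∀ u ∈ p.support, u ∈ q.support → u = m) : (p.append q).IsPath := by
  rw [Walk.isPath_def, Walk.support_append]
  have hmt : m ∉ q.support.tail := by
    have := hq.support_nodup
    rw [q.support_eq_cons] at this
    exact (List.nodup_cons.mp this).1
  refine List.Nodup.append hp.support_nodup ?_ ?_
  · have := hq.support_nodup
    rw [q.support_eq_cons] at this
    exact (List.nodup_cons.mp this).2
  · intro u hu hut
    have huq : u ∈ q.support := by
      rw [q.support_eq_cons]; exact List.mem_cons_of_mem _ hut
    have := h u hu huq
    subst this
    exact hmt hut

/-- First vertex of a path lying in a set containing its endpoint. -/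
lemma exists_first (P : Set V) : ∀ {z x : V} (r : G.Walk z x), r.IsPath → x ∈ P →
    ∃ m, m ∈ P ∧ ∃ r1 : G.Walk z m, r1.IsPath ∧
      (∀ u ∈ r1.support, u ∈ P → u = m) ∧ (∀ u ∈ r1.support, u ∈ r.support) := by
  intro z x r
  induction r with
  | nil =>
    intro _ hx
    exact ⟨_, hx, Walk.nil, Walk.IsPath.nil, fun u hu _ => by simpa using hu, fun u hu => hu⟩
  | @cons z' b' x' h r' ih =>
    intro hr hx
    by_cases hz : z' ∈ P
    · refine ⟨z', hz, Walk.nil, Walk.IsPath.nil, fun u hu _ => by simpa using hu, ?_⟩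
      intro u hu
      have : u = z' := by simpa using hu
      subst this
      exact Walk.start_mem_support _
    · obtain ⟨hr', hzn⟩ := (Walk.cons_isPath_iff _ _).mp hr
      obtain ⟨m, hm, r1, hr1, hfirst, hsub⟩ := ih hr' hx
      refine ⟨m, hm, Walk.cons h r1, ?_, ?_, ?_⟩
      · rw [Walk.cons_isPath_iff]
        exact ⟨hr1, fun hc => hzn (hsub _ hc)⟩
      · intro u hu huP
        rw [Walk.support_cons, List.mem_cons] at hu
        rcases hu with rfl | hu
        · exact absurd huP hz
        · exact hfirst u hu huP
      · intro u hu
        rw [Walk.support_cons, List.mem_cons] at hu ⊢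
        rcases hu with rfl | hu
        · exact Or.inl rfl
        · exact Or.inr (hsub u hu)

/-- Median vertex of a tree. -/
lemma median (hG : G.IsTree) (x y z : V) :
    ∃ m, m ∈ pset hG x y ∧ m ∈ pset hG x z ∧ m ∈ pset hG y z := by
  obtain ⟨m, hmP, r1, hr1, hfirst, hsub⟩ :=
    exists_first (pset hG x y) (tpath hG z x) (tpath_isPath hG z x) (left_mem_pset hG x y)
  refine ⟨m, hmP, ?_, ?_⟩
  · have : m ∈ pset hG z x := hsub m r1.end_mem_support
    rwa [pset_symm] at this
  · -- path z → m → y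
    have hsubmy : pset hG m y ⊆ pset hG x y := pset_sub_right hG hmP
    have hq : ((r1.append (tpath hG m y))).IsPath := by
      refine append_isPath hr1 (tpath_isPath hG m y) ?_
      intro u hu huq
      exact hfirst u hu (hsubmy huq)
    have heq : r1.append (tpath hG m y) = tpath hG z y := tpath_unique hG _ hq
    have : m ∈ pset hG z y := by
      show m ∈ (tpath hG z y).support
      rw [← heq, Walk.mem_support_append_iff]
      exact Or.inl r1.end_mem_support
    rwa [pset_symm] at this

/-- Quartet lemma: if the `x–u` and `y–w` paths are disjoint, the `x–y` and `u–w`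
paths intersect. -/
lemma quartet (hG : G.IsTree) {x y u w : V}
    (hD : Disjoint (pset hG x u) (pset hG y w)) :
    ∃ z, z ∈ pset hG x y ∧ z ∈ pset hG u w := by
  obtain ⟨m1, h1xy, h1xu, h1yu⟩ := median hG x y u
  obtain ⟨m2, h2yu, h2yw, h2uw⟩ := median hG y u w
  have hsplit : m2 ∈ pset hG y m1 ∪ pset hG m1 u := by
    rw [← pset_split hG h1yu]; exact h2yu
  rcases hsplit with h | h
  · refine ⟨m2, ?_, h2uw⟩
    have : pset hG y m1 ⊆ pset hG y x := pset_sub_left hG (by rwa [pset_symm] at h1xy)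
    have := this h
    rwa [pset_symm] at this
  · exfalso
    have : pset hG m1 u ⊆ pset hG x u := pset_sub_right hG h1xu
    exact Set.disjoint_left.mp hD (this h) h2yw

end TreeLemmas


lemma pset_subset_subtree {L : Type} {X : Set L} (T : PhyloTree X) {S : Set L} {x y : L}
    (hx : x ∈ S ∩ X) (hy : y ∈ S ∩ X) :
    pset T.isTree (T.leaf x) (T.leaf y) ⊆ subtree T S :=
  fun w hw => ⟨x, hx, y, hy, tpath T.isTree _ _, tpath_isPath T.isTree _ _, hw⟩

lemma displays_disjoint {L : Type} {X : Set L} {T : PhyloTree X} {χ : L → ℕ}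
    (h : displays T χ) {x y u w : L} (hx : x ∈ X) (hy : y ∈ X) (hu : u ∈ X) (hw : w ∈ X)
    (hxy : χ y = χ x) (huw : χ w = χ u) (hne : χ x ≠ χ u) :
    Disjoint (pset T.isTree (T.leaf x) (T.leaf y)) (pset T.isTree (T.leaf u) (T.leaf w)) :=
  Disjoint.mono (pset_subset_subtree T (S := {l | χ l = χ x}) ⟨rfl, hx⟩ ⟨hxy, hy⟩)
    (pset_subset_subtree T (S := {l | χ l = χ u}) ⟨rfl, hu⟩ ⟨huw, hw⟩) (h (χ x) (χ u) hne)

/-- The set {Ω_A, χ₂, φ₃, Ω_B} on X = {a₁,…,a₄,b₁,…,b₄} is incompatible. -/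
theorem eight_taxa_incompatible :
    ¬ compatible (Xset 4) {OmA, chi 2, phi 3, OmB 4} := by
  rintro ⟨T, hdisp⟩
  have hOmA : displays T OmA := hdisp OmA (Or.inl rfl)
  have hchi : displays T (chi 2) := hdisp (chi 2) (Or.inr (Or.inl rfl))
  have hphi : displays T (phi 3) := hdisp (phi 3) (Or.inr (Or.inr (Or.inl rfl)))
  have hOmB : displays T (OmB 4) := hdisp (OmB 4) (Or.inr (Or.inr (Or.inr rfl)))
  have ha1 : a 1 ∈ Xset 4 := by simp [Xset, a]
  have ha2 : a 2 ∈ Xset 4 := by simp [Xset, a]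
  have ha3 : a 3 ∈ Xset 4 := by simp [Xset, a]
  have hb2 : b 2 ∈ Xset 4 := by simp [Xset, b]
  have hb3 : b 3 ∈ Xset 4 := by simp [Xset, b]
  have hb4 : b 4 ∈ Xset 4 := by simp [Xset, b]
  set A1 := T.leaf (a 1)
  set A2 := T.leaf (a 2)
  set A3 := T.leaf (a 3)
  set B2 := T.leaf (b 2)
  set B3 := T.leaf (b 3)
  set B4 := T.leaf (b 4)
  have D1 : Disjoint (pset T.isTree A1 B2) (pset T.isTree A2 B3) :=
    displays_disjoint hOmA ha1 hb2 ha2 hb3 (by decide) (by decide) (by decide)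
  have D2 : Disjoint (pset T.isTree A3 B4) (pset T.isTree A2 B3) :=
    displays_disjoint hOmB ha3 hb4 ha2 hb3 (by decide) (by decide) (by decide)
  have D3 : Disjoint (pset T.isTree A2 A3) (pset T.isTree B2 B3) :=
    displays_disjoint hchi ha2 ha3 hb2 hb3 (by decide) (by decide) (by decide)
  have D4 : Disjoint (pset T.isTree A1 A2) (pset T.isTree B3 B4) :=
    displays_disjoint hphi ha1 ha2 hb3 hb4 (by decide) (by decide) (by decide)
  obtain ⟨v, hv1, hv2⟩ := quartet T.isTree D1
  obtain ⟨p, hp1, hp2⟩ := quartet T.isTree D2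
  obtain ⟨m, hm1, hm2, hm3⟩ := median T.isTree A2 v p
  obtain ⟨m', hn1, hn2, hn3⟩ := median T.isTree B3 v p
  have hmA12 : m ∈ pset T.isTree A1 A2 := by
    have hv1' : v ∈ pset T.isTree A2 A1 := by rwa [pset_symm] at hv1
    have h := pset_sub_left T.isTree hv1' hm1
    rwa [pset_symm] at h
  have hmA23 : m ∈ pset T.isTree A2 A3 := by
    have hp1' : p ∈ pset T.isTree A2 A3 := by rwa [pset_symm] at hp1
    exact pset_sub_left T.isTree hp1' hm2
  have hp2' : p ∈ pset T.isTree B3 B4 := by rwa [pset_symm] at hp2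
  have hn1' : m' ∈ pset T.isTree v B3 := by rwa [pset_symm] at hn1
  have hcase : m ∈ pset T.isTree v m' ∪ pset T.isTree m' p := by
    rw [← pset_split T.isTree hn3]; exact hm3
  rcases hcase with h | h
  · have hmB : m ∈ pset T.isTree B2 B3 :=
      pset_sub_right T.isTree hv2 (pset_sub_left T.isTree hn1' h)
    exact Set.disjoint_left.mp D3 hmA23 hmB
  · have hmB : m ∈ pset T.isTree B3 B4 :=
      pset_sub_left T.isTree hp2' (pset_sub_right T.isTree hn2 h)
    exact Set.disjoint_left.mp D4 hmA12 hmB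


end PP
end

section
/- For even n ≥ 6, the lobster tree A displays the character Ω_A = a1b1b2 | {a2} ∪ X_{≥3}. -/
namespace PP

/-- The edges of the lobster `A`: central path a₁,u₁,…,u_{n-1},aₙ; edges uᵢvᵢ;
for odd i, vᵢ is adjacent to bᵢ and b_{i+1}; for even i, vᵢ is adjacent to aᵢ and a_{i+1}. -/
def AdjSpecA (n : ℕ) {X : Set Lbl} (T : PhyloTree X) (u v : ℕ → T.V) (w w' : T.V) : Prop :=
  (w = T.leaf (a 1) ∧ w' = u 1) ∨
  (∃ i, 1 ≤ i ∧ i + 1 ≤ n - 1 ∧ w = u i ∧ w' = u (i + 1)) ∨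
  (w = u (n - 1) ∧ w' = T.leaf (a n)) ∨
  (∃ i, 1 ≤ i ∧ i ≤ n - 1 ∧ w = u i ∧ w' = v i) ∨
  (∃ i, 1 ≤ i ∧ i ≤ n - 1 ∧ i % 2 = 1 ∧ w = v i ∧
      (w' = T.leaf (b i) ∨ w' = T.leaf (b (i + 1)))) ∨
  (∃ i, 1 ≤ i ∧ i ≤ n - 1 ∧ i % 2 = 0 ∧ w = v i ∧
      (w' = T.leaf (a i) ∨ w' = T.leaf (a (i + 1))))

/-- `T`, with internal vertices `u i`, `v i` (1 ≤ i ≤ n-1), is the lobster `A`. -/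
def IsLobsterA (n : ℕ) (T : PhyloTree (Xset n)) (u v : ℕ → T.V) : Prop :=
  (∀ i j, 1 ≤ i → i ≤ n - 1 → 1 ≤ j → j ≤ n - 1 →
      (u i = u j → i = j) ∧ (v i = v j → i = j) ∧ u i ≠ v j) ∧
  (∀ p ∈ Xset n, ∀ i, 1 ≤ i → i ≤ n - 1 → T.leaf p ≠ u i ∧ T.leaf p ≠ v i) ∧
  (∀ w : T.V, (∃ p ∈ Xset n, T.leaf p = w) ∨
      (∃ i, 1 ≤ i ∧ i ≤ n - 1 ∧ (u i = w ∨ v i = w))) ∧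
  (∀ w w' : T.V, T.G.Adj w w' ↔ (AdjSpecA n T u v w w' ∨ AdjSpecA n T u v w' w))


lemma walk_enter {V : Type} {G : SimpleGraph V} (F : Set V) (c : V)
    (hcut : ∀ w w' : V, G.Adj w w' → w ∉ F → w' ∈ F → w = c) :
    ∀ {x y : V} (q : G.Walk x y), x ∈ F → y ∉ F → c ∈ q.support := by
  intro x y q
  induction q with
  | nil => intro hx hy; exact absurd hx hy
  | @cons xx x' yy hh q ih =>
    intro hx hy
    rw [SimpleGraph.Walk.support_cons]
    by_cases h' : x' ∈ F
    · exact List.mem_cons_of_mem _ (ih h' hy)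
    · have hc : x' = c := hcut x' xx hh.symm h' hx
      exact List.mem_cons_of_mem _ (hc ▸ q.start_mem_support)

lemma path_avoid {V : Type} {G : SimpleGraph V} (F : Set V) (c : V)
    (hcut : ∀ w w' : V, G.Adj w w' → w ∉ F → w' ∈ F → w = c) :
    ∀ {x y : V} (p : G.Walk x y), p.IsPath → x ∉ F → y ∉ F →
      ∀ z ∈ p.support, z ∉ F := by
  intro x y p
  induction p with
  | nil =>
    intro _ hx _ z hz
    rw [SimpleGraph.Walk.support_nil, List.mem_singleton] at hz
    subst hz; exact hx
  | @cons xx x' yy hh q ih =>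
    intro hp hx hy z hz
    by_cases h' : x' ∈ F
    · exfalso
      have hxc : xx = c := hcut xx x' hh hx h'
      have hcq : c ∈ q.support := walk_enter F c hcut q h' hy
      rw [← hxc] at hcq
      exact ((SimpleGraph.Walk.cons_isPath_iff hh q).mp hp).2 hcq
    · rw [SimpleGraph.Walk.support_cons] at hz
      rcases List.mem_cons.mp hz with rfl | hz
      · exact hx
      · exact ih ((SimpleGraph.Walk.cons_isPath_iff hh q).mp hp).1 h' hy z hz

theorem lobsterA_displays_OmA (n : ℕ) (hn : Even n) (hn6 : 6 ≤ n)
    (T : PhyloTree (Xset n)) (u v : ℕ → T.V) (hA : IsLobsterA n T u v) :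
    displays T OmA := by
  obtain ⟨hdist, hleafne, -, hadj⟩ := hA
  have h1n : (1:ℕ) ≤ n - 1 := by omega
  have h2n : (2:ℕ) ≤ n - 1 := by omega
  have hmema : ∀ i, 1 ≤ i → i ≤ n → a i ∈ Xset n := fun i h1 h2 => ⟨h1, h2⟩
  have hmemb : ∀ i, 1 ≤ i → i ≤ n → b i ∈ Xset n := fun i h1 h2 => ⟨h1, h2⟩
  set V0 : Set T.V :=
    {w | w = T.leaf (a 1) ∨ w = T.leaf (b 1) ∨ w = T.leaf (b 2) ∨ w = u 1 ∨ w = v 1}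
    with hV0def
  -- membership characterizations
  have hinj := T.leaf_injOn
  have hLa : ∀ i, 1 ≤ i → i ≤ n → (T.leaf (a i) ∈ V0 ↔ i = 1) := by
    intro i hi1 hi2
    constructor
    · rintro (h | h | h | h | h)
      · have := hinj (hmema i hi1 hi2) (hmema 1 le_rfl (by omega)) h
        simpa [a] using congrArg Prod.snd this
      · have := hinj (hmema i hi1 hi2) (hmemb 1 le_rfl (by omega)) h
        simpa [a, b] using congrArg Prod.fst this
      · have := hinj (hmema i hi1 hi2) (hmemb 2 (by omega) (by omega)) h
        simpa [a, b] using congrArg Prod.fst this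
      · exact absurd h (hleafne _ (hmema i hi1 hi2) 1 le_rfl h1n).1
      · exact absurd h (hleafne _ (hmema i hi1 hi2) 1 le_rfl h1n).2
    · rintro rfl; exact Or.inl rfl
  have hLb : ∀ i, 1 ≤ i → i ≤ n → (T.leaf (b i) ∈ V0 ↔ i ≤ 2) := by
    intro i hi1 hi2
    constructor
    · rintro (h | h | h | h | h)
      · have := hinj (hmemb i hi1 hi2) (hmema 1 le_rfl (by omega)) h
        simpa [a, b] using congrArg Prod.fst this
      · have := hinj (hmemb i hi1 hi2) (hmemb 1 le_rfl (by omega)) h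
        have := congrArg Prod.snd this
        simp [b] at this; omega
      · have := hinj (hmemb i hi1 hi2) (hmemb 2 (by omega) (by omega)) h
        have := congrArg Prod.snd this
        simp [b] at this; omega
      · exact absurd h (hleafne _ (hmemb i hi1 hi2) 1 le_rfl h1n).1
      · exact absurd h (hleafne _ (hmemb i hi1 hi2) 1 le_rfl h1n).2
    · intro h
      interval_cases i
      · exact Or.inr (Or.inl rfl)
      · exact Or.inr (Or.inr (Or.inl rfl))
  have hU : ∀ i, 1 ≤ i → i ≤ n - 1 → (u i ∈ V0 ↔ i = 1) := by
    intro i hi1 hi2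
    constructor
    · rintro (h | h | h | h | h)
      · exact absurd h.symm (hleafne _ (hmema 1 le_rfl (by omega)) i hi1 hi2).1
      · exact absurd h.symm (hleafne _ (hmemb 1 le_rfl (by omega)) i hi1 hi2).1
      · exact absurd h.symm (hleafne _ (hmemb 2 (by omega) (by omega)) i hi1 hi2).1
      · exact (hdist i 1 hi1 hi2 le_rfl h1n).1 h
      · exact absurd h (hdist i 1 hi1 hi2 le_rfl h1n).2.2
    · rintro rfl; exact Or.inr (Or.inr (Or.inr (Or.inl rfl)))
  have hV : ∀ i, 1 ≤ i → i ≤ n - 1 → (v i ∈ V0 ↔ i = 1) := by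
    intro i hi1 hi2
    constructor
    · rintro (h | h | h | h | h)
      · exact absurd h.symm (hleafne _ (hmema 1 le_rfl (by omega)) i hi1 hi2).2
      · exact absurd h.symm (hleafne _ (hmemb 1 le_rfl (by omega)) i hi1 hi2).2
      · exact absurd h.symm (hleafne _ (hmemb 2 (by omega) (by omega)) i hi1 hi2).2
      · exact absurd h.symm (hdist 1 i le_rfl h1n hi1 hi2).2.2
      · exact (hdist i 1 hi1 hi2 le_rfl h1n).2.1 h
    · rintro rfl; exact Or.inr (Or.inr (Or.inr (Or.inr rfl)))
  -- the unique cut edge of V0 is u 1 -- u 2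
  have hcross : ∀ w w', T.G.Adj w w' → w ∈ V0 → w' ∉ V0 → w = u 1 ∧ w' = u 2 := by
    intro w w' h hw hw'
    rcases (hadj w w').mp h with hsp | hsp <;>
      rcases hsp with ⟨rfl, rfl⟩ | ⟨i, hi1, hi2, rfl, rfl⟩ | ⟨rfl, rfl⟩ |
        ⟨i, hi1, hi2, rfl, rfl⟩ | ⟨i, hi1, hi2, hodd, rfl, hbr⟩ |
        ⟨i, hi1, hi2, hev, rfl, hbr⟩
    -- forward direction cases
    · exact absurd ((hU 1 le_rfl h1n).mpr rfl) hw'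
    · have : i = 1 := (hU i hi1 (by omega)).mp hw
      subst this; exact ⟨rfl, rfl⟩
    · have : n - 1 = 1 := (hU (n-1) h1n le_rfl).mp hw
      omega
    · have : i = 1 := (hU i hi1 hi2).mp hw
      subst this
      exact absurd ((hV 1 le_rfl h1n).mpr rfl) hw'
    · have hi : i = 1 := (hV i hi1 hi2).mp hw
      subst hi
      rcases hbr with rfl | rfl
      · exact absurd ((hLb 1 le_rfl (by omega)).mpr (by omega)) hw'
      · exact absurd ((hLb 2 (by omega) (by omega)).mpr le_rfl) hw'
    · have hi : i = 1 := (hV i hi1 hi2).mp hw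
      omega
    -- reversed direction cases
    · exact absurd (Or.inl rfl) hw'
    · have : i + 1 = 1 := (hU (i+1) (by omega) (by omega)).mp hw
      omega
    · have : n = 1 := (hLa n (by omega) le_rfl).mp hw
      omega
    · have : i = 1 := (hV i hi1 hi2).mp hw
      subst this
      exact absurd ((hU 1 le_rfl h1n).mpr rfl) hw'
    · have hi : i = 1 := by
        rcases hbr with rfl | rfl
        · have := (hLb i hi1 (by omega)).mp hw; omega
        · have := (hLb (i+1) (by omega) (by omega)).mp hw; omega
      subst hi
      exact absurd ((hV 1 le_rfl h1n).mpr rfl) hw'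
    · have : False := by
        rcases hbr with rfl | rfl
        · have := (hLa i hi1 (by omega)).mp hw; omega
        · have := (hLa (i+1) (by omega) (by omega)).mp hw; omega
      exact this.elim
  -- leaves with OmA = 0 lie in V0, leaves with OmA = 1 outside
  have hleaf0 : ∀ x : Lbl, OmA x = 0 → x ∈ Xset n → T.leaf x ∈ V0 := by
    rintro ⟨bb, i⟩ h0 ⟨hx1, hx2⟩
    cases bb
    · have : i = 1 := by simp [OmA] at h0; omega
      subst this; exact Or.inl rfl
    · have : i ≤ 2 := by simp [OmA] at h0; omega
      exact (hLb i hx1 hx2).mpr this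
  have hleaf1 : ∀ x : Lbl, OmA x = 1 → x ∈ Xset n → T.leaf x ∉ V0 := by
    rintro ⟨bb, i⟩ h0 ⟨hx1, hx2⟩
    cases bb
    · have hne : i ≠ 1 := by simp [OmA] at h0; omega
      intro hmem
      exact hne ((hLa i hx1 hx2).mp hmem)
    · have hne : ¬ i ≤ 2 := by simp [OmA] at h0; omega
      intro hmem
      exact hne ((hLb i hx1 hx2).mp hmem)
  -- the two subtrees
  have hsub0 : ∀ w ∈ subtree T {x | OmA x = 0}, w ∈ V0 := by
    rintro w ⟨x, ⟨hx0, hxX⟩, y, ⟨hy0, hyX⟩, p, hp, hw⟩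
    have hcut : ∀ w w' : T.V, T.G.Adj w w' → w ∉ {z : T.V | z ∉ V0} →
        w' ∈ {z : T.V | z ∉ V0} → w = u 1 := by
      intro w w' h hw hw'
      exact (hcross w w' h (not_not.mp hw) hw').1
    have := path_avoid {z : T.V | z ∉ V0} (u 1) hcut p hp
      (by simpa using hleaf0 x hx0 hxX) (by simpa using hleaf0 y hy0 hyX) w hw
    simpa using this
  have hsub1 : ∀ w ∈ subtree T {x | OmA x = 1}, w ∉ V0 := by
    rintro w ⟨x, ⟨hx0, hxX⟩, y, ⟨hy0, hyX⟩, p, hp, hw⟩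
    have hcut : ∀ w w' : T.V, T.G.Adj w w' → w ∉ V0 → w' ∈ V0 → w = u 2 := by
      intro w w' h hw hw'
      exact (hcross w' w h.symm hw' hw).2
    exact path_avoid V0 (u 2) hcut p hp (hleaf1 x hx0 hxX) (hleaf1 y hy0 hyX) w hw
  have hd01 : Disjoint (subtree T {x | OmA x = 0}) (subtree T {x | OmA x = 1}) :=
    Set.disjoint_left.mpr fun w h0 h1 => (hsub1 w h1) (hsub0 w h0)
  have hemp : ∀ s : ℕ, s ≠ 0 → s ≠ 1 → subtree T {x | OmA x = s} = ∅ := by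
    intro s hs0 hs1
    have hOm : ∀ x : Lbl, OmA x ≠ s := by
      rintro ⟨bb, i⟩ h
      cases bb <;> simp [OmA] at h <;> split at h <;> omega
    ext w
    simp only [Set.mem_empty_iff_false, iff_false]
    rintro ⟨x, ⟨hx0, -⟩, -⟩
    exact hOm x hx0
  intro s t hst
  rcases eq_or_ne s 0 with rfl | hs0
  · rcases eq_or_ne t 1 with rfl | ht1
    · exact hd01
    · rw [hemp t (Ne.symm hst) ht1]; exact disjoint_bot_right
  · rcases eq_or_ne s 1 with rfl | hs1
    · rcases eq_or_ne t 0 with rfl | ht0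
      · exact hd01.symm
      · rw [hemp t ht0 (Ne.symm hst)]; exact disjoint_bot_right
    · rw [hemp s hs0 hs1]; exact disjoint_bot_left

end PP
end

section
/- For even n ≥ 6, the lobster tree A is a perfect phylogeny for the set C \ {Ω_B}, i.e. A displays Ω_A, every χ_j for 2 ≤ j ≤ n-2, and every φ_j for 3 ≤ j ≤ n-1. -/
namespace PP

/-! ### Auxiliary machinery -/

section Aux
variable {L : Type} {X : Set L} {T : PhyloTree X}

def Linked (T : PhyloTree X) (W : Set T.V) (x y : T.V) : Prop :=
  ∃ p : T.G.Walk x y, ∀ z ∈ p.support, z ∈ W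

lemma linked_refl {W : Set T.V} {x : T.V} (h : x ∈ W) : Linked T W x x :=
  ⟨SimpleGraph.Walk.nil, by simpa using h⟩

lemma linked_symm {W : Set T.V} {x y : T.V} (h : Linked T W x y) : Linked T W y x := by
  obtain ⟨p, hp⟩ := h
  exact ⟨p.reverse, by intro z hz; apply hp; simpa [SimpleGraph.Walk.support_reverse] using hz⟩

lemma linked_trans {W : Set T.V} {x y z : T.V} (h : Linked T W x y) (h' : Linked T W y z) :
    Linked T W x z := by
  obtain ⟨p, hp⟩ := h; obtain ⟨q, hq⟩ := h'
  refine ⟨p.append q, ?_⟩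
  intro w hw
  rcases (SimpleGraph.Walk.mem_support_append_iff p q).mp hw with h | h
  · exact hp _ h
  · exact hq _ h

lemma linked_adj {W : Set T.V} {x y : T.V} (h : T.G.Adj x y) (hx : x ∈ W) (hy : y ∈ W) :
    Linked T W x y := by
  refine ⟨SimpleGraph.Walk.cons h SimpleGraph.Walk.nil, ?_⟩
  intro z hz
  simp only [SimpleGraph.Walk.support_cons, SimpleGraph.Walk.support_nil, List.mem_cons,
    List.mem_singleton] at hz
  rcases hz with rfl | rfl | h
  · exact hx
  · exact hy
  · cases h

lemma subtree_subset_of_linked {S : Set L} {W : Set T.V}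
    (h : ∀ x ∈ S ∩ X, ∀ y ∈ S ∩ X, Linked T W (T.leaf x) (T.leaf y)) :
    subtree T S ⊆ W := by
  classical
  intro w hw
  obtain ⟨x, hx, y, hy, p, hp, hwp⟩ := hw
  obtain ⟨q, hq⟩ := h x hx y hy
  obtain ⟨r, -, hun⟩ := (SimpleGraph.isTree_iff_existsUnique_path.mp T.isTree).2
    (T.leaf x) (T.leaf y)
  have h1 : p = r := hun p hp
  have h2 : q.bypass = r := hun q.bypass q.bypass_isPath
  have : w ∈ q.bypass.support := by rw [h2, ← h1]; exact hwp
  exact hq _ (q.support_bypass_subset this)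

lemma subtree_subset_single {S : Set L} {z : L} (hz : ∀ x ∈ S ∩ X, x = z) :
    subtree T S ⊆ {w | ∃ x ∈ S ∩ X, w = T.leaf x} := by
  intro w hw
  obtain ⟨x, hx, y, hy, p, hp, hwp⟩ := hw
  have hxy : x = y := (hz x hx).trans (hz y hy).symm
  subst hxy
  obtain ⟨r, -, hun⟩ := (SimpleGraph.isTree_iff_existsUnique_path.mp T.isTree).2
    (T.leaf x) (T.leaf x)
  have h1 : p = r := hun p hp
  have h2 : (SimpleGraph.Walk.nil : T.G.Walk (T.leaf x) (T.leaf x)) = r :=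
    hun _ SimpleGraph.Walk.IsPath.nil
  rw [h1, ← h2] at hwp
  simp at hwp
  exact ⟨x, hx, hwp⟩

end Aux

/-- The index of the internal vertex from which a label's leaf hangs. -/
def site (n : ℕ) : Lbl → ℕ
  | (true, i) => if i % 2 = 1 then i else i - 1
  | (false, i) => if i = 1 then 1 else if i = n then n - 1 else
      if i % 2 = 0 then i else i - 1

def cover {n : ℕ} (T : PhyloTree (Xset n)) (u v : ℕ → T.V) (I J : Set ℕ) (S : Set Lbl) :
    Set T.V :=
  {w | (∃ i ∈ I, w = u i) ∨ (∃ i ∈ J, w = v i) ∨ (∃ x ∈ S ∩ Xset n, w = T.leaf x)}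

section Lob
variable {n : ℕ} {T : PhyloTree (Xset n)} {u v : ℕ → T.V}

lemma adj_of_spec (hA : IsLobsterA n T u v) {w w' : T.V} (h : AdjSpecA n T u v w w') :
    T.G.Adj w w' := (hA.2.2.2 w w').mpr (Or.inl h)

lemma site_bounds (hn : Even n) (hn6 : 6 ≤ n) {x : Lbl} (hx : x ∈ Xset n) :
    1 ≤ site n x ∧ site n x ≤ n - 1 := by
  obtain ⟨bb, i⟩ := x
  have h1 : 1 ≤ i := hx.1
  have h2 : i ≤ n := hx.2
  have hn2 := Nat.even_iff.mp hn
  cases bb <;> simp only [site] <;> split_ifs <;> omega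

lemma leaf_mem_cover {I J : Set ℕ} {S : Set Lbl} {x : Lbl} (hx : x ∈ S) (hX : x ∈ Xset n) :
    T.leaf x ∈ cover T u v I J S := Or.inr (Or.inr ⟨x, ⟨hx, hX⟩, rfl⟩)

lemma adj_v_leaf (hA : IsLobsterA n T u v) (hn : Even n) (hn6 : 6 ≤ n) {x : Lbl}
    (hX : x ∈ Xset n) (h1 : x ≠ a 1) (h2 : x ≠ a n) :
    T.G.Adj (v (site n x)) (T.leaf x) := by
  have hn2 := Nat.even_iff.mp hn
  obtain ⟨bb, i⟩ := x
  have hi1 : 1 ≤ i := hX.1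
  have hi2 : i ≤ n := hX.2
  apply adj_of_spec hA
  cases bb
  · have hne1 : i ≠ 1 := fun h => h1 (by simp [a, h])
    have hnen : i ≠ n := fun h => h2 (by simp [a, h])
    refine Or.inr (Or.inr (Or.inr (Or.inr (Or.inr ?_))))
    by_cases hp : i % 2 = 0
    · have hs : site n (false, i) = i := by simp only [site]; split_ifs <;> omega
      rw [hs]
      exact ⟨i, by omega, by omega, hp, rfl, Or.inl rfl⟩
    · have hs : site n (false, i) = i - 1 := by simp only [site]; split_ifs <;> omega
      rw [hs]
      refine ⟨i - 1, by omega, by omega, by omega, rfl, Or.inr ?_⟩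
      have he : i - 1 + 1 = i := by omega
      rw [he]; rfl
  · refine Or.inr (Or.inr (Or.inr (Or.inr (Or.inl ?_))))
    by_cases hp : i % 2 = 1
    · have hs : site n (true, i) = i := by simp only [site]; split_ifs <;> omega
      rw [hs]
      exact ⟨i, by omega, by omega, hp, rfl, Or.inl rfl⟩
    · have hs : site n (true, i) = i - 1 := by simp only [site]; split_ifs <;> omega
      rw [hs]
      refine ⟨i - 1, by omega, by omega, by omega, rfl, Or.inr ?_⟩
      have he : i - 1 + 1 = i := by omega
      rw [he]; rfl

lemma linked_leaf_site (hA : IsLobsterA n T u v) (hn : Even n) (hn6 : 6 ≤ n)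
    {I J : Set ℕ} {S : Set Lbl} {x : Lbl} (hx : x ∈ S) (hX : x ∈ Xset n)
    (hI : site n x ∈ I) (hJ : site n x ∈ J) :
    Linked T (cover T u v I J S) (T.leaf x) (u (site n x)) := by
  have hu : u (site n x) ∈ cover T u v I J S := Or.inl ⟨_, hI, rfl⟩
  have hl : T.leaf x ∈ cover T u v I J S := leaf_mem_cover hx hX
  by_cases h1 : x = a 1
  · subst h1
    have hs : site n (a 1) = 1 := by simp [site, a]
    rw [hs] at hu ⊢
    exact linked_adj (adj_of_spec hA (Or.inl ⟨rfl, rfl⟩)) hl hu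
  by_cases h2 : x = a n
  · subst h2
    have hs : site n (a n) = n - 1 := by
      simp only [site, a]; split_ifs <;> omega
    rw [hs] at hu ⊢
    exact linked_symm
      (linked_adj (adj_of_spec hA (Or.inr (Or.inr (Or.inl ⟨rfl, rfl⟩)))) hu hl)
  · have hvv : v (site n x) ∈ cover T u v I J S := Or.inr (Or.inl ⟨_, hJ, rfl⟩)
    have hb := site_bounds hn hn6 hX
    have hadj1 : T.G.Adj (v (site n x)) (T.leaf x) := adj_v_leaf hA hn hn6 hX h1 h2
    have hadj2 : T.G.Adj (u (site n x)) (v (site n x)) :=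
      adj_of_spec hA (Or.inr (Or.inr (Or.inr (Or.inl ⟨_, hb.1, hb.2, rfl, rfl⟩))))
    exact linked_trans (linked_symm (linked_adj hadj1 hvv hl))
      (linked_symm (linked_adj hadj2 hu hvv))

lemma linked_spine (hA : IsLobsterA n T u v) {I J : Set ℕ} {S : Set Lbl} {i : ℕ}
    (hi : 1 ≤ i) :
    ∀ k, i ≤ k → k ≤ n - 1 → (∀ m, i ≤ m → m ≤ k → m ∈ I) →
      Linked T (cover T u v I J S) (u i) (u k) := by
  intro k
  induction k with
  | zero => intro h _ _; omega
  | succ k ih =>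
    intro hik hk hm
    by_cases hik' : i = k + 1
    · subst hik'; exact linked_refl (Or.inl ⟨k + 1, hm (k + 1) le_rfl le_rfl, rfl⟩)
    · have h1 : i ≤ k := by omega
      have hl := ih h1 (by omega) (fun m ha hb => hm m ha (by omega))
      refine linked_trans hl (linked_adj ?_ (Or.inl ⟨k, hm k h1 (by omega), rfl⟩)
        (Or.inl ⟨k + 1, hm (k + 1) (by omega) le_rfl, rfl⟩))
      exact adj_of_spec hA (Or.inr (Or.inl ⟨k, by omega, by omega, rfl, rfl⟩))

lemma master (hA : IsLobsterA n T u v) (hn : Even n) (hn6 : 6 ≤ n) {S : Set Lbl}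
    {I J : Set ℕ} (lo hi : ℕ) (hIco : ∀ m, lo ≤ m → m ≤ hi → m ∈ I) (hhi : hi ≤ n - 1)
    (hx : ∀ x ∈ S ∩ Xset n, (lo ≤ site n x ∧ site n x ≤ hi) ∧ site n x ∈ J) :
    subtree T S ⊆ cover T u v I J S := by
  apply subtree_subset_of_linked
  intro x hx' y hy'
  obtain ⟨⟨hx1, hx2⟩, hxJ⟩ := hx x hx'
  obtain ⟨⟨hy1, hy2⟩, hyJ⟩ := hx y hy'
  have hbx := site_bounds hn hn6 hx'.2
  have hby := site_bounds hn hn6 hy'.2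
  have lx := linked_leaf_site hA hn hn6 hx'.1 hx'.2 (hIco _ hx1 hx2) hxJ
  have ly := linked_leaf_site hA hn hn6 hy'.1 hy'.2 (hIco _ hy1 hy2) hyJ
  rcases le_total (site n x) (site n y) with h | h
  · exact linked_trans lx (linked_trans (linked_spine hA hbx.1 _ h (by omega)
      (fun m ha hb => hIco m (by omega) (by omega))) (linked_symm ly))
  · exact linked_trans lx (linked_trans (linked_symm (linked_spine hA hby.1 _ h (by omega)
      (fun m ha hb => hIco m (by omega) (by omega)))) (linked_symm ly))

lemma sharedv (hA : IsLobsterA n T u v) (hn : Even n) (hn6 : 6 ≤ n) {S : Set Lbl}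
    {I J : Set ℕ} (k : ℕ) (hkJ : k ∈ J)
    (hx : ∀ x ∈ S ∩ Xset n, site n x = k ∧ x ≠ a 1 ∧ x ≠ a n) :
    subtree T S ⊆ cover T u v I J S := by
  apply subtree_subset_of_linked
  intro x hx' y hy'
  obtain ⟨hsx, hx1, hx2⟩ := hx x hx'
  obtain ⟨hsy, hy1, hy2⟩ := hx y hy'
  have ax := adj_v_leaf hA hn hn6 hx'.2 hx1 hx2
  have ay := adj_v_leaf hA hn hn6 hy'.2 hy1 hy2
  rw [hsx] at ax; rw [hsy] at ay
  have hv : v k ∈ cover T u v I J S := Or.inr (Or.inl ⟨k, hkJ, rfl⟩)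
  exact linked_trans (linked_symm (linked_adj ax hv (leaf_mem_cover hx'.1 hx'.2)))
    (linked_adj ay hv (leaf_mem_cover hy'.1 hy'.2))

lemma single_sub_cover {S : Set Lbl} {I J : Set ℕ} {z : Lbl}
    (hz : ∀ x ∈ S ∩ Xset n, x = z) :
    subtree T S ⊆ cover T u v I J S := by
  intro w hw
  obtain ⟨x, hx, he⟩ := subtree_subset_single hz hw
  exact Or.inr (Or.inr ⟨x, hx, he⟩)

lemma cover_disjoint (hA : IsLobsterA n T u v) {I J I' J' : Set ℕ} {S S' : Set Lbl}
    (hR : ∀ i, (i ∈ I ∨ i ∈ J ∨ i ∈ I' ∨ i ∈ J') → 1 ≤ i ∧ i ≤ n - 1)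
    (hII : ∀ i, i ∈ I → i ∈ I' → False) (hJJ : ∀ i, i ∈ J → i ∈ J' → False)
    (hSS : ∀ x, x ∈ S → x ∈ S' → False) :
    Disjoint (cover T u v I J S) (cover T u v I' J' S') := by
  rw [Set.disjoint_left]
  rintro w hw hw'
  rcases hw with ⟨i, hi, rfl⟩ | ⟨i, hi, rfl⟩ | ⟨x, hxS, rfl⟩
  · rcases hw' with ⟨i', hi', he⟩ | ⟨i', hi', he⟩ | ⟨x', hx'S, he⟩
    · obtain ⟨r1, r2⟩ := hR i (Or.inl hi)
      obtain ⟨r3, r4⟩ := hR i' (Or.inr (Or.inr (Or.inl hi')))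
      have := (hA.1 i i' r1 r2 r3 r4).1 he
      subst this; exact hII i hi hi'
    · obtain ⟨r1, r2⟩ := hR i (Or.inl hi)
      obtain ⟨r3, r4⟩ := hR i' (Or.inr (Or.inr (Or.inr hi')))
      exact (hA.1 i i' r1 r2 r3 r4).2.2 he
    · obtain ⟨r1, r2⟩ := hR i (Or.inl hi)
      exact (hA.2.1 x' hx'S.2 i r1 r2).1 he.symm
  · rcases hw' with ⟨i', hi', he⟩ | ⟨i', hi', he⟩ | ⟨x', hx'S, he⟩
    · obtain ⟨r1, r2⟩ := hR i (Or.inr (Or.inl hi))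
      obtain ⟨r3, r4⟩ := hR i' (Or.inr (Or.inr (Or.inl hi')))
      exact (hA.1 i' i r3 r4 r1 r2).2.2 he.symm
    · obtain ⟨r1, r2⟩ := hR i (Or.inr (Or.inl hi))
      obtain ⟨r3, r4⟩ := hR i' (Or.inr (Or.inr (Or.inr hi')))
      have := (hA.1 i i' r1 r2 r3 r4).2.1 he
      subst this; exact hJJ i hi hi'
    · obtain ⟨r1, r2⟩ := hR i (Or.inr (Or.inl hi))
      exact (hA.2.1 x' hx'S.2 i r1 r2).2 he.symm
  · rcases hw' with ⟨i', hi', he⟩ | ⟨i', hi', he⟩ | ⟨x', hx'S, he⟩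
    · obtain ⟨r3, r4⟩ := hR i' (Or.inr (Or.inr (Or.inl hi')))
      exact (hA.2.1 x hxS.2 i' r3 r4).1 he
    · obtain ⟨r3, r4⟩ := hR i' (Or.inr (Or.inr (Or.inr hi')))
      exact (hA.2.1 x hxS.2 i' r3 r4).2 he
    · have hxx := T.leaf_injOn hxS.2 hx'S.2 he
      exact hSS x hxS.1 (hxx ▸ hx'S.1)

end Lob


/-! ### Characterisations of the characters -/

lemma chi_cases {j : ℕ} {bb : Bool} {i s : ℕ} (h : chi j (bb, i) = s) :
    (s = 0 ∧ i + 2 ≤ j) ∨ (s = 1 ∧ bb = false ∧ i + 1 = j) ∨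
    (s = 2 ∧ bb = true ∧ i + 1 = j) ∨
    (s = 3 ∧ bb = false ∧ j ≤ i ∧ i ≤ j + 1) ∨
    (s = 4 ∧ bb = true ∧ j ≤ i ∧ i ≤ j + 1) ∨
    (s = 5 ∧ bb = false ∧ i = j + 2) ∨ (s = 6 ∧ bb = true ∧ i = j + 2) ∨
    (s = 7 ∧ j + 3 ≤ i) := by
  cases bb <;> simp only [chi, cond] at h <;> split_ifs at h <;> subst h <;> simp <;> omega

lemma phiMain_cases {j i s : ℕ} (h : phiMain j i = s) :
    (s = 0 ∧ i < j) ∨ (s = 3 ∧ i = j) ∨ (s = 4 ∧ i = j + 1) ∨ (s = 5 ∧ j + 2 ≤ i) := by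
  unfold phiMain at h; split_ifs at h <;> omega

lemma phiSide_cases {j i s : ℕ} (h : phiSide j i = s) :
    (s = 0 ∧ i + 3 ≤ j) ∨ (s = 1 ∧ i + 2 = j) ∨ (s = 2 ∧ i + 1 = j) ∨ (s = 5 ∧ j ≤ i) := by
  unfold phiSide at h; split_ifs at h <;> omega

lemma phi_cases {j i s : ℕ} {bb : Bool} (h : phi j (bb, i) = s) :
    (phiMain j i = s ∧ ((j % 2 = 0 ∧ bb = true) ∨ (j % 2 ≠ 0 ∧ bb = false))) ∨
    (phiSide j i = s ∧ ((j % 2 = 0 ∧ bb = false) ∨ (j % 2 ≠ 0 ∧ bb = true))) := by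
  by_cases hp : j % 2 = 0 <;> cases bb <;> simp only [phi, cond, hp, if_true, if_false] at h <;>
    first
      | exact Or.inl ⟨h, by simp [hp]⟩
      | exact Or.inr ⟨h, by simp [hp]⟩

lemma OmA_cases {bb : Bool} {i s : ℕ} (h : OmA (bb, i) = s) (h1 : 1 ≤ i) :
    (s = 0 ∧ ((bb = true ∧ i ≤ 2) ∨ (bb = false ∧ i = 1))) ∨
    (s = 1 ∧ ((bb = true ∧ 3 ≤ i) ∨ (bb = false ∧ 2 ≤ i))) := by
  cases bb <;> simp only [OmA, cond] at h <;> split_ifs at h <;> subst h <;> simp <;> omega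

/-! ### The index sets for the covers -/

def chiI (n j s : ℕ) : Set ℕ := {i |
  (s = 0 ∧ 1 ≤ i ∧ i + 2 ≤ j) ∨
  (s = 3 ∧ j % 2 = 1 ∧ j - 1 ≤ i ∧ i ≤ j + 1) ∨
  (s = 4 ∧ j % 2 = 0 ∧ j - 1 ≤ i ∧ i ≤ j + 1) ∨
  (s = 7 ∧ j + 2 ≤ i ∧ i ≤ n - 1)}

def chiJ (n j s : ℕ) : Set ℕ := {i |
  (s = 0 ∧ 1 ≤ i ∧ i + 2 ≤ j) ∨
  (s = 3 ∧ ((j % 2 = 0 ∧ i = j) ∨ (j % 2 = 1 ∧ (i = j - 1 ∨ i = j + 1)))) ∨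
  (s = 4 ∧ ((j % 2 = 1 ∧ i = j) ∨ (j % 2 = 0 ∧ (i = j - 1 ∨ i = j + 1)))) ∨
  (s = 7 ∧ j + 2 ≤ i ∧ i ≤ n - 1)}

def phiIJ (n j s : ℕ) : Set ℕ := {i |
  (s = 0 ∧ 1 ≤ i ∧ i ≤ j - 1) ∨ (s = 5 ∧ j ≤ i ∧ i ≤ n - 1)}

def omIJ (n s : ℕ) : Set ℕ := {i |
  (s = 0 ∧ i = 1) ∨ (s = 1 ∧ 2 ≤ i ∧ i ≤ n - 1)}

section Disp
variable {n : ℕ} {T : PhyloTree (Xset n)} {u v : ℕ → T.V}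

lemma displays_chi (hA : IsLobsterA n T u v) (hn : Even n) (hn6 : 6 ≤ n) {j : ℕ}
    (hj2 : 2 ≤ j) (hjn : j ≤ n - 2) : displays T (chi j) := by
  have hn2 := Nat.even_iff.mp hn
  have main : ∀ s, subtree T {x | chi j x = s} ⊆
      cover T u v (chiI n j s) (chiJ n j s) {x | chi j x = s} := by
    intro s
    by_cases h0 : s = 0
    · subst h0
      apply master hA hn hn6 1 (j - 2)
        (fun m h1 h2 => Or.inl ⟨rfl, h1, by omega⟩) (by omega)
      rintro ⟨bb, i⟩ ⟨hs, hX⟩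
      have h1 : 1 ≤ i := hX.1
      have h2 : i ≤ n := hX.2
      have hs' : chi j (bb, i) = 0 := hs
      rcases chi_cases hs' with ⟨hv, hc⟩ | ⟨hv, hb, hc⟩ | ⟨hv, hb, hc⟩ | ⟨hv, hb, hc1, hc2⟩ |
        ⟨hv, hb, hc1, hc2⟩ | ⟨hv, hb, hc⟩ | ⟨hv, hb, hc⟩ | ⟨hv, hc⟩ <;>
        first
          | omega
          | (cases bb <;> simp only [site, chiJ, Set.mem_setOf_eq] <;> split_ifs <;> simp <;> omega)
    by_cases h7 : s = 7
    · subst h7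
      apply master hA hn hn6 (j + 2) (n - 1)
        (fun m h1 h2 => Or.inr (Or.inr (Or.inr ⟨rfl, h1, h2⟩))) (by omega)
      rintro ⟨bb, i⟩ ⟨hs, hX⟩
      have h1 : 1 ≤ i := hX.1
      have h2 : i ≤ n := hX.2
      have hs' : chi j (bb, i) = 7 := hs
      rcases chi_cases hs' with ⟨hv, hc⟩ | ⟨hv, hb, hc⟩ | ⟨hv, hb, hc⟩ | ⟨hv, hb, hc1, hc2⟩ |
        ⟨hv, hb, hc1, hc2⟩ | ⟨hv, hb, hc⟩ | ⟨hv, hb, hc⟩ | ⟨hv, hc⟩ <;>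
        first
          | omega
          | (cases bb <;> simp only [site, chiJ, Set.mem_setOf_eq] <;> split_ifs <;> simp <;> omega)
    by_cases h3 : s = 3
    · subst h3
      by_cases hp : j % 2 = 0
      · apply sharedv hA hn hn6 j (Or.inr (Or.inl ⟨rfl, Or.inl ⟨hp, rfl⟩⟩))
        rintro ⟨bb, i⟩ ⟨hs, hX⟩
        have h1 : 1 ≤ i := hX.1
        have h2 : i ≤ n := hX.2
        have hs' : chi j (bb, i) = 3 := hs
        rcases chi_cases hs' with ⟨hv, hc⟩ | ⟨hv, hb, hc⟩ | ⟨hv, hb, hc⟩ | ⟨hv, hb, hc1, hc2⟩ |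
          ⟨hv, hb, hc1, hc2⟩ | ⟨hv, hb, hc⟩ | ⟨hv, hb, hc⟩ | ⟨hv, hc⟩ <;> try omega
        subst hb
        refine ⟨by simp only [site]; split_ifs <;> omega, by simp [a]; omega, by simp [a]; omega⟩
      · apply master hA hn hn6 (j - 1) (j + 1)
          (fun m h1 h2 => Or.inr (Or.inl ⟨rfl, by omega, h1, h2⟩)) (by omega)
        rintro ⟨bb, i⟩ ⟨hs, hX⟩
        have h1 : 1 ≤ i := hX.1
        have h2 : i ≤ n := hX.2
        have hs' : chi j (bb, i) = 3 := hs
        rcases chi_cases hs' with ⟨hv, hc⟩ | ⟨hv, hb, hc⟩ | ⟨hv, hb, hc⟩ | ⟨hv, hb, hc1, hc2⟩ |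
          ⟨hv, hb, hc1, hc2⟩ | ⟨hv, hb, hc⟩ | ⟨hv, hb, hc⟩ | ⟨hv, hc⟩ <;> try omega
        subst hb
        simp only [site, chiJ, Set.mem_setOf_eq] <;> split_ifs <;> simp <;> omega
    by_cases h4 : s = 4
    · subst h4
      by_cases hp : j % 2 = 0
      · apply master hA hn hn6 (j - 1) (j + 1)
          (fun m h1 h2 => Or.inr (Or.inr (Or.inl ⟨rfl, hp, h1, h2⟩))) (by omega)
        rintro ⟨bb, i⟩ ⟨hs, hX⟩
        have h1 : 1 ≤ i := hX.1
        have h2 : i ≤ n := hX.2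
        have hs' : chi j (bb, i) = 4 := hs
        rcases chi_cases hs' with ⟨hv, hc⟩ | ⟨hv, hb, hc⟩ | ⟨hv, hb, hc⟩ | ⟨hv, hb, hc1, hc2⟩ |
          ⟨hv, hb, hc1, hc2⟩ | ⟨hv, hb, hc⟩ | ⟨hv, hb, hc⟩ | ⟨hv, hc⟩ <;> try omega
        subst hb
        simp only [site, chiJ, Set.mem_setOf_eq] <;> split_ifs <;> simp <;> omega
      · apply sharedv hA hn hn6 j
          (Or.inr (Or.inr (Or.inl ⟨rfl, Or.inl ⟨by omega, rfl⟩⟩)))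
        rintro ⟨bb, i⟩ ⟨hs, hX⟩
        have h1 : 1 ≤ i := hX.1
        have h2 : i ≤ n := hX.2
        have hs' : chi j (bb, i) = 4 := hs
        rcases chi_cases hs' with ⟨hv, hc⟩ | ⟨hv, hb, hc⟩ | ⟨hv, hb, hc⟩ | ⟨hv, hb, hc1, hc2⟩ |
          ⟨hv, hb, hc1, hc2⟩ | ⟨hv, hb, hc⟩ | ⟨hv, hb, hc⟩ | ⟨hv, hc⟩ <;> try omega
        subst hb
        refine ⟨by simp only [site]; split_ifs <;> omega, by simp [a], by simp [a]⟩
    -- remaining: singleton or empty states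
    · have hsingle : ∀ z : Lbl, (∀ x ∈ {x | chi j x = s} ∩ Xset n, x = z) →
          subtree T {x | chi j x = s} ⊆
            cover T u v (chiI n j s) (chiJ n j s) {x | chi j x = s} :=
        fun z hz => single_sub_cover hz
      by_cases h1' : s = 1
      · subst h1'
        apply hsingle (a (j - 1))
        rintro ⟨bb, i⟩ ⟨hs, hX⟩
        have hs' : chi j (bb, i) = 1 := hs
        rcases chi_cases hs' with ⟨hv, hc⟩ | ⟨hv, hb, hc⟩ | ⟨hv, hb, hc⟩ | ⟨hv, hb, hc1, hc2⟩ |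
          ⟨hv, hb, hc1, hc2⟩ | ⟨hv, hb, hc⟩ | ⟨hv, hb, hc⟩ | ⟨hv, hc⟩ <;>
          first | omega | (subst hb; simp [a, b]; omega)
      by_cases h2' : s = 2
      · subst h2'
        apply hsingle (b (j - 1))
        rintro ⟨bb, i⟩ ⟨hs, hX⟩
        have hs' : chi j (bb, i) = 2 := hs
        rcases chi_cases hs' with ⟨hv, hc⟩ | ⟨hv, hb, hc⟩ | ⟨hv, hb, hc⟩ | ⟨hv, hb, hc1, hc2⟩ |
          ⟨hv, hb, hc1, hc2⟩ | ⟨hv, hb, hc⟩ | ⟨hv, hb, hc⟩ | ⟨hv, hc⟩ <;>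
          first | omega | (subst hb; simp [a, b]; omega)
      by_cases h5' : s = 5
      · subst h5'
        apply hsingle (a (j + 2))
        rintro ⟨bb, i⟩ ⟨hs, hX⟩
        have hs' : chi j (bb, i) = 5 := hs
        rcases chi_cases hs' with ⟨hv, hc⟩ | ⟨hv, hb, hc⟩ | ⟨hv, hb, hc⟩ | ⟨hv, hb, hc1, hc2⟩ |
          ⟨hv, hb, hc1, hc2⟩ | ⟨hv, hb, hc⟩ | ⟨hv, hb, hc⟩ | ⟨hv, hc⟩ <;>
          first | omega | (subst hb; simp [a, b]; omega)
      by_cases h6' : s = 6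
      · subst h6'
        apply hsingle (b (j + 2))
        rintro ⟨bb, i⟩ ⟨hs, hX⟩
        have hs' : chi j (bb, i) = 6 := hs
        rcases chi_cases hs' with ⟨hv, hc⟩ | ⟨hv, hb, hc⟩ | ⟨hv, hb, hc⟩ | ⟨hv, hb, hc1, hc2⟩ |
          ⟨hv, hb, hc1, hc2⟩ | ⟨hv, hb, hc⟩ | ⟨hv, hb, hc⟩ | ⟨hv, hc⟩ <;>
          first | omega | (subst hb; simp [a, b]; omega)
      · apply hsingle (a 1)
        rintro ⟨bb, i⟩ ⟨hs, hX⟩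
        have hs' : chi j (bb, i) = s := hs
        rcases chi_cases hs' with ⟨hv, hc⟩ | ⟨hv, hb, hc⟩ | ⟨hv, hb, hc⟩ | ⟨hv, hb, hc1, hc2⟩ |
          ⟨hv, hb, hc1, hc2⟩ | ⟨hv, hb, hc⟩ | ⟨hv, hb, hc⟩ | ⟨hv, hc⟩ <;> omega
  intro s t hst
  refine (cover_disjoint hA ?_ ?_ ?_ ?_).mono (main s) (main t)
  · intro i hi
    simp only [chiI, chiJ, Set.mem_setOf_eq] at hi
    omega
  · intro i hi1 hi2
    simp only [chiI, Set.mem_setOf_eq] at hi1 hi2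
    omega
  · intro i hi1 hi2
    simp only [chiJ, Set.mem_setOf_eq] at hi1 hi2
    omega
  · intro x h1x h2x
    exact hst ((h1x : chi j x = s).symm.trans h2x)

lemma displays_phi (hA : IsLobsterA n T u v) (hn : Even n) (hn6 : 6 ≤ n) {j : ℕ}
    (hj3 : 3 ≤ j) (hjn : j ≤ n - 1) : displays T (phi j) := by
  have hn2 := Nat.even_iff.mp hn
  have main : ∀ s, subtree T {x | phi j x = s} ⊆
      cover T u v (phiIJ n j s) (phiIJ n j s) {x | phi j x = s} := by
    intro s
    by_cases h0 : s = 0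
    · subst h0
      apply master hA hn hn6 1 (j - 1)
        (fun m h1 h2 => Or.inl ⟨rfl, h1, h2⟩) (by omega)
      rintro ⟨bb, i⟩ ⟨hs, hX⟩
      have h1 : 1 ≤ i := hX.1
      have h2 : i ≤ n := hX.2
      have hs' : phi j (bb, i) = 0 := hs
      rcases phi_cases hs' with ⟨hm, hside⟩ | ⟨hm, hside⟩ <;>
        [rcases phiMain_cases hm with ⟨hv, hc⟩ | ⟨hv, hc⟩ | ⟨hv, hc⟩ | ⟨hv, hc⟩;
         rcases phiSide_cases hm with ⟨hv, hc⟩ | ⟨hv, hc⟩ | ⟨hv, hc⟩ | ⟨hv, hc⟩] <;>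
        first
          | omega
          | (rcases hside with ⟨hp, rfl⟩ | ⟨hp, rfl⟩ <;>
              simp only [site, phiIJ, Set.mem_setOf_eq] <;> split_ifs <;> simp <;> omega)
    by_cases h5 : s = 5
    · subst h5
      apply master hA hn hn6 j (n - 1)
        (fun m h1 h2 => Or.inr ⟨rfl, h1, h2⟩) (by omega)
      rintro ⟨bb, i⟩ ⟨hs, hX⟩
      have h1 : 1 ≤ i := hX.1
      have h2 : i ≤ n := hX.2
      have hs' : phi j (bb, i) = 5 := hs
      rcases phi_cases hs' with ⟨hm, hside⟩ | ⟨hm, hside⟩ <;>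
        [rcases phiMain_cases hm with ⟨hv, hc⟩ | ⟨hv, hc⟩ | ⟨hv, hc⟩ | ⟨hv, hc⟩;
         rcases phiSide_cases hm with ⟨hv, hc⟩ | ⟨hv, hc⟩ | ⟨hv, hc⟩ | ⟨hv, hc⟩] <;>
        first
          | omega
          | (rcases hside with ⟨hp, rfl⟩ | ⟨hp, rfl⟩ <;>
              simp only [site, phiIJ, Set.mem_setOf_eq] <;> split_ifs <;> simp <;> omega)
    · have hsingle : ∀ z : Lbl, (∀ x ∈ {x | phi j x = s} ∩ Xset n, x = z) →
          subtree T {x | phi j x = s} ⊆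
            cover T u v (phiIJ n j s) (phiIJ n j s) {x | phi j x = s} :=
        fun z hz => single_sub_cover hz
      by_cases h1' : s = 1
      · subst h1'
        apply hsingle (if j % 2 = 0 then a (j - 2) else b (j - 2))
        rintro ⟨bb, i⟩ ⟨hs, hX⟩
        have hs' : phi j (bb, i) = 1 := hs
        rcases phi_cases hs' with ⟨hm, hside⟩ | ⟨hm, hside⟩ <;>
          [rcases phiMain_cases hm with ⟨hv, hc⟩ | ⟨hv, hc⟩ | ⟨hv, hc⟩ | ⟨hv, hc⟩;
           rcases phiSide_cases hm with ⟨hv, hc⟩ | ⟨hv, hc⟩ | ⟨hv, hc⟩ | ⟨hv, hc⟩] <;>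
          first
            | omega
            | (rcases hside with ⟨hp, rfl⟩ | ⟨hp, rfl⟩ <;> simp [hp, a, b] <;> omega)
      by_cases h2' : s = 2
      · subst h2'
        apply hsingle (if j % 2 = 0 then a (j - 1) else b (j - 1))
        rintro ⟨bb, i⟩ ⟨hs, hX⟩
        have hs' : phi j (bb, i) = 2 := hs
        rcases phi_cases hs' with ⟨hm, hside⟩ | ⟨hm, hside⟩ <;>
          [rcases phiMain_cases hm with ⟨hv, hc⟩ | ⟨hv, hc⟩ | ⟨hv, hc⟩ | ⟨hv, hc⟩;
           rcases phiSide_cases hm with ⟨hv, hc⟩ | ⟨hv, hc⟩ | ⟨hv, hc⟩ | ⟨hv, hc⟩] <;>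
          first
            | omega
            | (rcases hside with ⟨hp, rfl⟩ | ⟨hp, rfl⟩ <;> simp [hp, a, b] <;> omega)
      by_cases h3' : s = 3
      · subst h3'
        apply hsingle (if j % 2 = 0 then b j else a j)
        rintro ⟨bb, i⟩ ⟨hs, hX⟩
        have hs' : phi j (bb, i) = 3 := hs
        rcases phi_cases hs' with ⟨hm, hside⟩ | ⟨hm, hside⟩ <;>
          [rcases phiMain_cases hm with ⟨hv, hc⟩ | ⟨hv, hc⟩ | ⟨hv, hc⟩ | ⟨hv, hc⟩;
           rcases phiSide_cases hm with ⟨hv, hc⟩ | ⟨hv, hc⟩ | ⟨hv, hc⟩ | ⟨hv, hc⟩] <;>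
          first
            | omega
            | (rcases hside with ⟨hp, rfl⟩ | ⟨hp, rfl⟩ <;> simp [hp, a, b] <;> omega)
      by_cases h4' : s = 4
      · subst h4'
        apply hsingle (if j % 2 = 0 then b (j + 1) else a (j + 1))
        rintro ⟨bb, i⟩ ⟨hs, hX⟩
        have hs' : phi j (bb, i) = 4 := hs
        rcases phi_cases hs' with ⟨hm, hside⟩ | ⟨hm, hside⟩ <;>
          [rcases phiMain_cases hm with ⟨hv, hc⟩ | ⟨hv, hc⟩ | ⟨hv, hc⟩ | ⟨hv, hc⟩;
           rcases phiSide_cases hm with ⟨hv, hc⟩ | ⟨hv, hc⟩ | ⟨hv, hc⟩ | ⟨hv, hc⟩] <;>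
          first
            | omega
            | (rcases hside with ⟨hp, rfl⟩ | ⟨hp, rfl⟩ <;> simp [hp, a, b] <;> omega)
      · apply hsingle (a 1)
        rintro ⟨bb, i⟩ ⟨hs, hX⟩
        have hs' : phi j (bb, i) = s := hs
        rcases phi_cases hs' with ⟨hm, hside⟩ | ⟨hm, hside⟩ <;>
          [rcases phiMain_cases hm with ⟨hv, hc⟩ | ⟨hv, hc⟩ | ⟨hv, hc⟩ | ⟨hv, hc⟩;
           rcases phiSide_cases hm with ⟨hv, hc⟩ | ⟨hv, hc⟩ | ⟨hv, hc⟩ | ⟨hv, hc⟩] <;> omega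
  intro s t hst
  refine (cover_disjoint hA ?_ ?_ ?_ ?_).mono (main s) (main t)
  · intro i hi
    simp only [phiIJ, Set.mem_setOf_eq] at hi
    omega
  · intro i hi1 hi2
    simp only [phiIJ, Set.mem_setOf_eq] at hi1 hi2
    omega
  · intro i hi1 hi2
    simp only [phiIJ, Set.mem_setOf_eq] at hi1 hi2
    omega
  · intro x h1x h2x
    exact hst ((h1x : phi j x = s).symm.trans h2x)

lemma displays_OmA (hA : IsLobsterA n T u v) (hn : Even n) (hn6 : 6 ≤ n) :
    displays T OmA := by
  have hn2 := Nat.even_iff.mp hn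
  have main : ∀ s, subtree T {x | OmA x = s} ⊆
      cover T u v (omIJ n s) (omIJ n s) {x | OmA x = s} := by
    intro s
    by_cases h0 : s = 0
    · subst h0
      apply master hA hn hn6 1 1 (fun m h1 h2 => Or.inl ⟨rfl, by omega⟩) (by omega)
      rintro ⟨bb, i⟩ ⟨hs, hX⟩
      have h1 : 1 ≤ i := hX.1
      have h2 : i ≤ n := hX.2
      have hs' : OmA (bb, i) = 0 := hs
      rcases OmA_cases hs' h1 with ⟨hv, hc⟩ | ⟨hv, hc⟩ <;>
        first
          | omega
          | (rcases hc with ⟨rfl, hc⟩ | ⟨rfl, hc⟩ <;>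
              simp only [site, omIJ, Set.mem_setOf_eq] <;> split_ifs <;> simp <;> omega)
    by_cases h1' : s = 1
    · subst h1'
      apply master hA hn hn6 2 (n - 1) (fun m h1 h2 => Or.inr ⟨rfl, h1, h2⟩) (by omega)
      rintro ⟨bb, i⟩ ⟨hs, hX⟩
      have h1 : 1 ≤ i := hX.1
      have h2 : i ≤ n := hX.2
      have hs' : OmA (bb, i) = 1 := hs
      rcases OmA_cases hs' h1 with ⟨hv, hc⟩ | ⟨hv, hc⟩ <;>
        first
          | omega
          | (rcases hc with ⟨rfl, hc⟩ | ⟨rfl, hc⟩ <;>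
              simp only [site, omIJ, Set.mem_setOf_eq] <;> split_ifs <;> simp <;> omega)
    · apply single_sub_cover (z := a 1)
      rintro ⟨bb, i⟩ ⟨hs, hX⟩
      have h1 : 1 ≤ i := hX.1
      have hs' : OmA (bb, i) = s := hs
      rcases OmA_cases hs' h1 with ⟨hv, hc⟩ | ⟨hv, hc⟩ <;> omega
  intro s t hst
  refine (cover_disjoint hA ?_ ?_ ?_ ?_).mono (main s) (main t)
  · intro i hi
    simp only [omIJ, Set.mem_setOf_eq] at hi
    omega
  · intro i hi1 hi2
    simp only [omIJ, Set.mem_setOf_eq] at hi1 hi2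
    omega
  · intro i hi1 hi2
    simp only [omIJ, Set.mem_setOf_eq] at hi1 hi2
    omega
  · intro x h1x h2x
    exact hst ((h1x : OmA x = s).symm.trans h2x)


end Disp

theorem lobsterA_compatible_C_minus_OmB (n : ℕ) (hn : Even n) (hn6 : 6 ≤ n)
    (T : PhyloTree (Xset n)) (u v : ℕ → T.V) (hA : IsLobsterA n T u v) :
    displays T OmA ∧
    (∀ j, 2 ≤ j → j ≤ n - 2 → displays T (chi j)) ∧
    (∀ j, 3 ≤ j → j ≤ n - 1 → displays T (phi j)) :=
  ⟨displays_OmA hA hn hn6,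
   fun _ hj1 hj2 => displays_chi hA hn hn6 hj1 hj2,
   fun _ hj1 hj2 => displays_phi hA hn hn6 hj1 hj2⟩

end PP
end

section
/- For even n ≥ 6, the lobster tree B displays Ω_B = X_{≤n-2} ∪ {b_{n-1}} | a_{n-1} a_n b_n. -/
namespace PP

/-- The edges of the lobster `B`: central path b₁,u₁,…,u_{n-1},bₙ; edges uᵢvᵢ;
for odd i, vᵢ is adjacent to aᵢ and a_{i+1}; for even i, vᵢ is adjacent to bᵢ and b_{i+1}. -/
def AdjSpecB (n : ℕ) {X : Set Lbl} (T : PhyloTree X) (u v : ℕ → T.V) (w w' : T.V) : Prop :=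
  (w = T.leaf (b 1) ∧ w' = u 1) ∨
  (∃ i, 1 ≤ i ∧ i + 1 ≤ n - 1 ∧ w = u i ∧ w' = u (i + 1)) ∨
  (w = u (n - 1) ∧ w' = T.leaf (b n)) ∨
  (∃ i, 1 ≤ i ∧ i ≤ n - 1 ∧ w = u i ∧ w' = v i) ∨
  (∃ i, 1 ≤ i ∧ i ≤ n - 1 ∧ i % 2 = 1 ∧ w = v i ∧
      (w' = T.leaf (a i) ∨ w' = T.leaf (a (i + 1)))) ∨
  (∃ i, 1 ≤ i ∧ i ≤ n - 1 ∧ i % 2 = 0 ∧ w = v i ∧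
      (w' = T.leaf (b i) ∨ w' = T.leaf (b (i + 1))))

/-- `T`, with internal vertices `u i`, `v i` (1 ≤ i ≤ n-1), is the lobster `B`. -/
def IsLobsterB (n : ℕ) (T : PhyloTree (Xset n)) (u v : ℕ → T.V) : Prop :=
  (∀ i j, 1 ≤ i → i ≤ n - 1 → 1 ≤ j → j ≤ n - 1 →
      (u i = u j → i = j) ∧ (v i = v j → i = j) ∧ u i ≠ v j) ∧
  (∀ p ∈ Xset n, ∀ i, 1 ≤ i → i ≤ n - 1 → T.leaf p ≠ u i ∧ T.leaf p ≠ v i) ∧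
  (∀ w : T.V, (∃ p ∈ Xset n, T.leaf p = w) ∨
      (∃ i, 1 ≤ i ∧ i ≤ n - 1 ∧ (u i = w ∨ v i = w))) ∧
  (∀ w w' : T.V, T.G.Adj w w' ↔ (AdjSpecB n T u v w w' ∨ AdjSpecB n T u v w' w))


lemma two_nbrs {V : Type} {G : SimpleGraph V} {w : V} :
    ∀ {x y : V} (p : G.Walk x y), p.IsPath → w ∈ p.support → w ≠ x → w ≠ y →
      ∃ w₁ ∈ p.support, ∃ w₂ ∈ p.support, w₁ ≠ w₂ ∧ G.Adj w w₁ ∧ G.Adj w w₂ := by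
  intro x y p
  induction p with
  | nil => intro _ hw hx _; simp at hw; exact absurd hw hx
  | @cons c d e h q ih =>
    intro hp hw hx hy
    rw [SimpleGraph.Walk.support_cons] at hw
    rcases List.mem_cons.mp hw with rfl | hwq
    · exact absurd rfl hx
    · by_cases hwd : w = d
      · subst hwd
        cases q with
        | nil => exact absurd rfl hy
        | @cons d' f e' h' q' =>
          refine ⟨c, by simp, f, ?_, ?_, h.symm, h'⟩
          · simp [SimpleGraph.Walk.support_cons]
          · rintro rfl
            have hc : c ∉ (SimpleGraph.Walk.cons h' q').support :=
              ((SimpleGraph.Walk.cons_isPath_iff h _).mp hp).2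
            exact hc (by simp [SimpleGraph.Walk.support_cons])
      · obtain ⟨w₁, h₁, w₂, h₂, hne, ha₁, ha₂⟩ := ih hp.of_cons hwq hwd hy
        exact ⟨w₁, by simp [h₁], w₂, by simp [h₂], hne, ha₁, ha₂⟩

lemma leaf_mem_support {V : Type} {G : SimpleGraph V} {x y w : V} (p : G.Walk x y)
    (hp : p.IsPath) (hleaf : IsLeafVert G w) (hw : w ∈ p.support) : w = x ∨ w = y := by
  by_contra hnot
  push_neg at hnot
  obtain ⟨w₁, _, w₂, _, hne, ha₁, ha₂⟩ := two_nbrs p hp hw hnot.1 hnot.2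
  exact hne (hleaf w₁ w₂ ha₁ ha₂)

/-- `w` is one of the five vertices of the subtree spanned by the state-1 leaves. -/
def inW1 {X : Set Lbl} (T : PhyloTree X) (u v : ℕ → T.V) (n : ℕ) (w : T.V) : Prop :=
  w = T.leaf (a (n-1)) ∨ w = T.leaf (a n) ∨ w = T.leaf (b n) ∨ w = u (n-1) ∨ w = v (n-1)

theorem lobsterB_displays_OmB (n : ℕ) (hn : Even n) (hn6 : 6 ≤ n)
    (T : PhyloTree (Xset n)) (u v : ℕ → T.V) (hB : IsLobsterB n T u v) :
    displays T (OmB n) := by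
  obtain ⟨hinj, hlne, hcov, hadj⟩ := hB
  have hpar : n % 2 = 0 := Nat.even_iff.mp hn
  have hsub : n - 1 + 1 = n := by omega
  -- memberships
  have hXa : ∀ i, 1 ≤ i → i ≤ n → a i ∈ Xset n := by
    intro i h1 h2; simp only [Xset, a, Set.mem_setOf_eq]; omega
  have hXb : ∀ i, 1 ≤ i → i ≤ n → b i ∈ Xset n := by
    intro i h1 h2; simp only [Xset, b, Set.mem_setOf_eq]; omega
  have haN1X : a (n-1) ∈ Xset n := hXa _ (by omega) (by omega)
  have haNX : a n ∈ Xset n := hXa _ (by omega) (by omega)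
  have hbNX : b n ∈ Xset n := hXb _ (by omega) (by omega)
  have hb1X : b 1 ∈ Xset n := hXb _ (by omega) (by omega)
  -- OmB values
  have hOaN1 : OmB n (a (n-1)) = 1 := by simp [OmB, a]; omega
  have hOaN : OmB n (a n) = 1 := by simp [OmB, a]
  have hObN : OmB n (b n) = 1 := by simp [OmB, b]
  have hOval : ∀ p : Lbl, OmB n p = 0 ∨ OmB n p = 1 := by
    rintro ⟨bl, i⟩
    cases bl <;> simp only [OmB, Bool.cond_false, Bool.cond_true] <;> split <;> tauto
  have hstate1 : ∀ z ∈ Xset n, OmB n z = 1 → z = a (n-1) ∨ z = a n ∨ z = b n := by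
    rintro ⟨bl, i⟩ ⟨hz1, hz2⟩ hz
    cases bl
    · simp only [OmB, Bool.cond_false] at hz
      split at hz
      · rename_i h
        rcases (by omega : i = n - 1 ∨ i = n) with h' | h' <;> subst h'
        · exact Or.inl rfl
        · exact Or.inr (Or.inl rfl)
      · exact absurd hz (by omega)
    · simp only [OmB, Bool.cond_true] at hz
      split at hz
      · rename_i h
        subst h
        exact Or.inr (Or.inr rfl)
      · exact absurd hz (by omega)
  -- adjacency facts
  have hA_lv : T.G.Adj (T.leaf (a (n-1))) (v (n-1)) := by
    rw [hadj]
    refine Or.inr (Or.inr (Or.inr (Or.inr (Or.inr (Or.inl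
      ⟨n-1, by omega, by omega, by omega, rfl, Or.inl rfl⟩)))))
  have hA_v_aN : T.G.Adj (v (n-1)) (T.leaf (a n)) := by
    rw [hadj]
    refine Or.inl (Or.inr (Or.inr (Or.inr (Or.inr (Or.inl
      ⟨n-1, by omega, by omega, by omega, rfl, Or.inr (by rw [hsub])⟩)))))
  have hA_uv : T.G.Adj (u (n-1)) (v (n-1)) := by
    rw [hadj]
    exact Or.inl (Or.inr (Or.inr (Or.inr (Or.inl ⟨n-1, by omega, by omega, rfl, rfl⟩))))
  have hA_u_bN : T.G.Adj (u (n-1)) (T.leaf (b n)) := by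
    rw [hadj]
    exact Or.inl (Or.inr (Or.inr (Or.inl ⟨rfl, rfl⟩)))
  -- neighbours of v (n-1)
  have hnbv : ∀ w', T.G.Adj (v (n-1)) w' →
      w' = u (n-1) ∨ w' = T.leaf (a (n-1)) ∨ w' = T.leaf (a n) := by
    intro w' hA
    rw [hadj] at hA
    rcases hA with hA | hA <;>
      rcases hA with ⟨h1, h2⟩ | ⟨i, hi1, hi2, h1, h2⟩ | ⟨h1, h2⟩ | ⟨i, hi1, hi2, h1, h2⟩ |
        ⟨i, hi1, hi2, hip, h1, h2⟩ | ⟨i, hi1, hi2, hip, h1, h2⟩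
    · exact absurd h1.symm (hlne _ hb1X (n-1) (by omega) (by omega)).2
    · exact absurd h1.symm (hinj i (n-1) hi1 (by omega) (by omega) (by omega)).2.2
    · exact absurd h1.symm (hinj (n-1) (n-1) (by omega) (by omega) (by omega) (by omega)).2.2
    · exact absurd h1.symm (hinj i (n-1) hi1 hi2 (by omega) (by omega)).2.2
    · have hieq : n - 1 = i := (hinj (n-1) i (by omega) (by omega) hi1 hi2).2.1 h1
      subst hieq
      rw [hsub] at h2
      tauto
    · have hieq : n - 1 = i := (hinj (n-1) i (by omega) (by omega) hi1 hi2).2.1 h1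
      omega
    · exact absurd h2.symm (hinj 1 (n-1) (by omega) (by omega) (by omega) (by omega)).2.2
    · exact absurd h2.symm (hinj (i+1) (n-1) (by omega) hi2 (by omega) (by omega)).2.2
    · exact absurd h2.symm (hlne _ hbNX (n-1) (by omega) (by omega)).2
    · have hieq : n - 1 = i := (hinj (n-1) i (by omega) (by omega) hi1 hi2).2.1 h2
      subst hieq
      exact Or.inl h1
    · rcases h2 with h2 | h2
      · exact absurd h2.symm (hlne _ (hXa i hi1 (by omega)) (n-1) (by omega) (by omega)).2
      · exact absurd h2.symm (hlne _ (hXa (i+1) (by omega) (by omega)) (n-1) (by omega) (by omega)).2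
    · rcases h2 with h2 | h2
      · exact absurd h2.symm (hlne _ (hXb i hi1 (by omega)) (n-1) (by omega) (by omega)).2
      · exact absurd h2.symm (hlne _ (hXb (i+1) (by omega) (by omega)) (n-1) (by omega) (by omega)).2
  -- neighbours of u (n-1)
  have hnbu : ∀ w', T.G.Adj (u (n-1)) w' →
      w' = u (n-2) ∨ w' = v (n-1) ∨ w' = T.leaf (b n) := by
    intro w' hA
    rw [hadj] at hA
    rcases hA with hA | hA <;>
      rcases hA with ⟨h1, h2⟩ | ⟨i, hi1, hi2, h1, h2⟩ | ⟨h1, h2⟩ | ⟨i, hi1, hi2, h1, h2⟩ |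
        ⟨i, hi1, hi2, hip, h1, h2⟩ | ⟨i, hi1, hi2, hip, h1, h2⟩
    · exact absurd h1.symm (hlne _ hb1X (n-1) (by omega) (by omega)).1
    · have hieq : n - 1 = i := (hinj (n-1) i (by omega) (by omega) hi1 (by omega)).1 h1
      omega
    · exact Or.inr (Or.inr h2)
    · have hieq : n - 1 = i := (hinj (n-1) i (by omega) (by omega) hi1 hi2).1 h1
      subst hieq
      exact Or.inr (Or.inl h2)
    · exact absurd h1 (hinj (n-1) i (by omega) (by omega) hi1 hi2).2.2
    · exact absurd h1 (hinj (n-1) i (by omega) (by omega) hi1 hi2).2.2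
    · have : n - 1 = 1 := (hinj (n-1) 1 (by omega) (by omega) (by omega) (by omega)).1 h2
      omega
    · have hieq : n - 1 = i + 1 :=
        (hinj (n-1) (i+1) (by omega) (by omega) (by omega) hi2).1 h2
      refine Or.inl ?_
      rw [h1]
      congr 1
      omega
    · exact absurd h2.symm (hlne _ hbNX (n-1) (by omega) (by omega)).1
    · exact absurd h2 (hinj (n-1) i (by omega) (by omega) hi1 hi2).2.2
    · rcases h2 with h2 | h2
      · exact absurd h2.symm (hlne _ (hXa i hi1 (by omega)) (n-1) (by omega) (by omega)).1
      · exact absurd h2.symm (hlne _ (hXa (i+1) (by omega) (by omega)) (n-1) (by omega) (by omega)).1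
    · rcases h2 with h2 | h2
      · exact absurd h2.symm (hlne _ (hXb i hi1 (by omega)) (n-1) (by omega) (by omega)).1
      · exact absurd h2.symm (hlne _ (hXb (i+1) (by omega) (by omega)) (n-1) (by omega) (by omega)).1
  -- distinctness of the five W1 vertices
  have d1 : T.leaf (a (n-1)) ≠ T.leaf (a n) := by
    intro h
    have := T.leaf_injOn haN1X haNX h
    simp [a] at this
    omega
  have d2 : T.leaf (a (n-1)) ≠ T.leaf (b n) := by
    intro h
    have := T.leaf_injOn haN1X hbNX h
    simp [a, b] at this
  have d3 : T.leaf (a n) ≠ T.leaf (b n) := by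
    intro h
    have := T.leaf_injOn haNX hbNX h
    simp [a, b] at this
  have duv : u (n-1) ≠ v (n-1) := (hinj (n-1) (n-1) (by omega) (by omega) (by omega) (by omega)).2.2
  have dl1u : T.leaf (a (n-1)) ≠ u (n-1) := (hlne _ haN1X (n-1) (by omega) (by omega)).1
  have dl1v : T.leaf (a (n-1)) ≠ v (n-1) := (hlne _ haN1X (n-1) (by omega) (by omega)).2
  have dl2u : T.leaf (a n) ≠ u (n-1) := (hlne _ haNX (n-1) (by omega) (by omega)).1
  have dl2v : T.leaf (a n) ≠ v (n-1) := (hlne _ haNX (n-1) (by omega) (by omega)).2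
  have dl3u : T.leaf (b n) ≠ u (n-1) := (hlne _ hbNX (n-1) (by omega) (by omega)).1
  have dl3v : T.leaf (b n) ≠ v (n-1) := (hlne _ hbNX (n-1) (by omega) (by omega)).2
  -- claim 0 : the subtree of state 0 avoids W1
  have claim0 : ∀ w, w ∈ subtree T {x | OmB n x = 0} → ¬ inW1 T u v n w := by
    intro w hw hW
    obtain ⟨x, hx, y, hy, p, hp, hwp⟩ := hw
    have hleafnot : ∀ z, z ∈ Xset n → OmB n z = 1 → T.leaf z ∉ p.support := by
      intro z hzX hz1 hmem
      rcases leaf_mem_support p hp (T.leaf_isLeaf z hzX) hmem with h | h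
      · have hzx := T.leaf_injOn hzX hx.2 h
        rw [hzx] at hz1
        have := hx.1
        simp only [Set.mem_setOf_eq] at this
        omega
      · have hzy := T.leaf_injOn hzX hy.2 h
        rw [hzy] at hz1
        have := hy.1
        simp only [Set.mem_setOf_eq] at this
        omega
    have hvnot : v (n-1) ∉ p.support := by
      intro hmem
      obtain ⟨w₁, hs₁, w₂, hs₂, hne, ha₁, ha₂⟩ := two_nbrs p hp hmem
        (fun h => (hlne x hx.2 (n-1) (by omega) (by omega)).2 h.symm)
        (fun h => (hlne y hy.2 (n-1) (by omega) (by omega)).2 h.symm)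
      have e₁ : w₁ = u (n-1) := by
        rcases hnbv w₁ ha₁ with h | h | h
        · exact h
        · exact absurd (h ▸ hs₁) (hleafnot _ haN1X hOaN1)
        · exact absurd (h ▸ hs₁) (hleafnot _ haNX hOaN)
      have e₂ : w₂ = u (n-1) := by
        rcases hnbv w₂ ha₂ with h | h | h
        · exact h
        · exact absurd (h ▸ hs₂) (hleafnot _ haN1X hOaN1)
        · exact absurd (h ▸ hs₂) (hleafnot _ haNX hOaN)
      exact hne (e₁.trans e₂.symm)
    have hunot : u (n-1) ∉ p.support := by
      intro hmem
      obtain ⟨w₁, hs₁, w₂, hs₂, hne, ha₁, ha₂⟩ := two_nbrs p hp hmem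
        (fun h => (hlne x hx.2 (n-1) (by omega) (by omega)).1 h.symm)
        (fun h => (hlne y hy.2 (n-1) (by omega) (by omega)).1 h.symm)
      have e₁ : w₁ = u (n-2) := by
        rcases hnbu w₁ ha₁ with h | h | h
        · exact h
        · exact absurd (h ▸ hs₁) hvnot
        · exact absurd (h ▸ hs₁) (hleafnot _ hbNX hObN)
      have e₂ : w₂ = u (n-2) := by
        rcases hnbu w₂ ha₂ with h | h | h
        · exact h
        · exact absurd (h ▸ hs₂) hvnot
        · exact absurd (h ▸ hs₂) (hleafnot _ hbNX hObN)
      exact hne (e₁.trans e₂.symm)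
    rcases hW with h | h | h | h | h
    · exact hleafnot _ haN1X hOaN1 (h ▸ hwp)
    · exact hleafnot _ haNX hOaN (h ▸ hwp)
    · exact hleafnot _ hbNX hObN (h ▸ hwp)
    · exact hunot (h ▸ hwp)
    · exact hvnot (h ▸ hwp)
  -- claim 1 : the subtree of state 1 is contained in W1
  have claim1 : ∀ w, w ∈ subtree T {x | OmB n x = 1} → inW1 T u v n w := by
    intro w hw
    obtain ⟨x, hx, y, hy, p, hp, hwp⟩ := hw
    have key : ∀ (c d : T.V) (r : T.G.Walk c d), r.IsPath →
        (∀ z ∈ r.support, inW1 T u v n z) →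
        ∀ (q : T.G.Walk c d), q.IsPath → w ∈ q.support → inW1 T u v n w := by
      intro c d r hr hrs q hq hwq
      have hqr : q = r := (T.isTree.existsUnique_path c d).unique hq hr
      exact hrs w (hqr ▸ hwq)
    have keysym : ∀ (c d : T.V),
        (∀ q : T.G.Walk c d, q.IsPath → w ∈ q.support → inW1 T u v n w) →
        ∀ q : T.G.Walk d c, q.IsPath → w ∈ q.support → inW1 T u v n w := by
      intro c d hcd q hq hwq
      exact hcd q.reverse hq.reverse (by simpa using hwq)
    have diag : ∀ c : T.V, inW1 T u v n c →
        ∀ q : T.G.Walk c c, q.IsPath → w ∈ q.support → inW1 T u v n w := by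
      intro c hc q hq hwq
      have hqr : q = SimpleGraph.Walk.nil :=
        (T.isTree.existsUnique_path c c).unique hq SimpleGraph.Walk.IsPath.nil
      subst hqr
      simp only [SimpleGraph.Walk.support_nil, List.mem_singleton] at hwq
      exact hwq ▸ hc
    -- explicit paths
    have hr1 : (SimpleGraph.Walk.cons hA_lv (SimpleGraph.Walk.cons hA_v_aN
        SimpleGraph.Walk.nil)).IsPath := by
      simp [SimpleGraph.Walk.cons_isPath_iff, dl1v, d1, dl2v.symm]
    have hs1 : ∀ z ∈ (SimpleGraph.Walk.cons hA_lv (SimpleGraph.Walk.cons hA_v_aN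
        SimpleGraph.Walk.nil)).support, inW1 T u v n z := by
      intro z hz
      simp only [SimpleGraph.Walk.support_cons, SimpleGraph.Walk.support_nil,
        List.mem_cons, List.mem_singleton] at hz
      unfold inW1
      rcases hz with rfl | rfl | rfl | h
      · tauto
      · tauto
      · tauto
      · simp at h
    have hr2 : (SimpleGraph.Walk.cons hA_lv (SimpleGraph.Walk.cons hA_uv.symm
        (SimpleGraph.Walk.cons hA_u_bN SimpleGraph.Walk.nil))).IsPath := by
      simp [SimpleGraph.Walk.cons_isPath_iff, dl1v, dl1u, d2, duv, duv.symm, dl3u.symm, dl3v.symm]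
    have hs2 : ∀ z ∈ (SimpleGraph.Walk.cons hA_lv (SimpleGraph.Walk.cons hA_uv.symm
        (SimpleGraph.Walk.cons hA_u_bN SimpleGraph.Walk.nil))).support, inW1 T u v n z := by
      intro z hz
      simp only [SimpleGraph.Walk.support_cons, SimpleGraph.Walk.support_nil,
        List.mem_cons, List.mem_singleton] at hz
      unfold inW1
      rcases hz with rfl | rfl | rfl | rfl | h
      · tauto
      · tauto
      · tauto
      · tauto
      · simp at h
    have hr3 : (SimpleGraph.Walk.cons hA_v_aN.symm (SimpleGraph.Walk.cons hA_uv.symm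
        (SimpleGraph.Walk.cons hA_u_bN SimpleGraph.Walk.nil))).IsPath := by
      simp [SimpleGraph.Walk.cons_isPath_iff, dl2v, dl2u, d3, duv, duv.symm, dl3u.symm, dl3v.symm]
    have hs3 : ∀ z ∈ (SimpleGraph.Walk.cons hA_v_aN.symm (SimpleGraph.Walk.cons hA_uv.symm
        (SimpleGraph.Walk.cons hA_u_bN SimpleGraph.Walk.nil))).support, inW1 T u v n z := by
      intro z hz
      simp only [SimpleGraph.Walk.support_cons, SimpleGraph.Walk.support_nil,
        List.mem_cons, List.mem_singleton] at hz
      unfold inW1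
      rcases hz with rfl | rfl | rfl | rfl | h
      · tauto
      · tauto
      · tauto
      · tauto
      · simp at h
    have case12 := key _ _ _ hr1 hs1
    have case13 := key _ _ _ hr2 hs2
    have case23 := key _ _ _ hr3 hs3
    have hx1 : x = a (n-1) ∨ x = a n ∨ x = b n := by
      refine hstate1 x hx.2 ?_
      have := hx.1; simpa using this
    have hy1 : y = a (n-1) ∨ y = a n ∨ y = b n := by
      refine hstate1 y hy.2 ?_
      have := hy.1; simpa using this
    rcases hx1 with rfl | rfl | rfl <;> rcases hy1 with rfl | rfl | rfl
    · exact diag _ (Or.inl rfl) p hp hwp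
    · exact case12 p hp hwp
    · exact case13 p hp hwp
    · exact keysym _ _ case12 p hp hwp
    · exact diag _ (Or.inr (Or.inl rfl)) p hp hwp
    · exact case23 p hp hwp
    · exact keysym _ _ case13 p hp hwp
    · exact keysym _ _ case23 p hp hwp
    · exact diag _ (Or.inr (Or.inr (Or.inl rfl))) p hp hwp
  -- conclusion
  intro s t hst
  rw [Set.disjoint_left]
  rintro w hws hwt
  have hs01 : s = 0 ∨ s = 1 := by
    obtain ⟨x, hx, _⟩ := hws
    have hval := hOval x
    have := hx.1
    simp only [Set.mem_setOf_eq] at this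
    omega
  have ht01 : t = 0 ∨ t = 1 := by
    obtain ⟨x, hx, _⟩ := hwt
    have hval := hOval x
    have := hx.1
    simp only [Set.mem_setOf_eq] at this
    omega
  rcases hs01 with rfl | rfl <;> rcases ht01 with rfl | rfl
  · exact hst rfl
  · exact claim0 w hws (claim1 w hwt)
  · exact claim0 w hwt (claim1 w hws)
  · exact hst rfl


end PP
end

section
/- For even n ≥ 6, the lobster tree B is a perfect phylogeny for C \ {Ω_A}: B displays Ω_B, every χ_j for 2 ≤ j ≤ n-2, and every φ_j for 3 ≤ j ≤ n-1. -/
/-!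
Colour the internal vertices of `B` with states: `u k` gets `colU k` and `v k` gets `colV k`.
In a tree, the path between two leaves stays inside every vertex set through which some walk
joins them, so `B` displays a character once any two leaves of the same state are joined by a
walk through vertices coloured with that state. In the lobster such a walk climbs from each leaf
to the spine and runs along the spine between the two attachment points; so it suffices that
the legs of non-singleton states and the spine between their attachment points carry the state.
For `Ω_B` and `φ_j` one threshold colouring (`n - 2`, resp. `j - 2`) serves legs and spine
alike; for `χ_j` the legs near `j` need their own colours, because one of the two pairs
`a_j a_{j+1}`, `b_j b_{j+1}` shares a leg while the other is joined through the spine.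
-/

namespace SimpleGraph

variable {V : Type*} {G : SimpleGraph V}

def JoinedIn (G : SimpleGraph V) (R : Set V) (x y : V) : Prop :=
  ∃ q : G.Walk x y, ∀ w ∈ q.support, w ∈ R

namespace JoinedIn

variable {R : Set V} {x y z : V}

theorem refl (hx : x ∈ R) : G.JoinedIn R x x :=
  ⟨.nil, by simpa using hx⟩

theorem of_adj (h : G.Adj x y) (hx : x ∈ R) (hy : y ∈ R) : G.JoinedIn R x y :=
  ⟨.cons h .nil, by simp [hx, hy]⟩

theorem symm (h : G.JoinedIn R x y) : G.JoinedIn R y x := by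
  obtain ⟨q, hq⟩ := h
  exact ⟨q.reverse, by simpa using hq⟩

theorem trans (h₁ : G.JoinedIn R x y) (h₂ : G.JoinedIn R y z) : G.JoinedIn R x z := by
  obtain ⟨q₁, hq₁⟩ := h₁
  obtain ⟨q₂, hq₂⟩ := h₂
  refine ⟨q₁.append q₂, fun w hw => ?_⟩
  rcases Walk.mem_support_append_iff q₁ q₂ |>.mp hw with hw | hw
  exacts [hq₁ w hw, hq₂ w hw]

theorem support_subset_of_isPath (hG : G.IsAcyclic) (h : G.JoinedIn R x y) {p : G.Walk x y}
    (hp : p.IsPath) : ∀ w ∈ p.support, w ∈ R := by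
  classical
  obtain ⟨q, hq⟩ := h
  have : p = q.bypass :=
    congrArg Subtype.val
      ((hG.subsingleton_path x y).elim ⟨p, hp⟩ ⟨q.bypass, q.bypass_isPath⟩)
  exact fun w hw => hq w (q.support_bypass_subset_support (this ▸ hw))

end JoinedIn

end SimpleGraph

namespace PP

open SimpleGraph Function

section Tree

variable {L : Type} {X : Set L} (T : PhyloTree X)

theorem subtree_subset_of_joinedIn {S : Set L} {R : Set T.V}
    (h : ∀ x ∈ S ∩ X, ∀ y ∈ S ∩ X, T.G.JoinedIn R (T.leaf x) (T.leaf y)) :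
    subtree T S ⊆ R := by
  rintro w ⟨x, hx, y, hy, p, hp, hw⟩
  exact (h x hx y hy).support_subset_of_isPath T.isTree.isAcyclic hp w hw

theorem displays_of_joinedIn {χ : L → ℕ} (R : ℕ → Set T.V) (hR : Pairwise (Disjoint on R))
    (h : ∀ x ∈ X, ∀ y ∈ X, χ x = χ y → T.G.JoinedIn (R (χ x)) (T.leaf x) (T.leaf y)) :
    displays T χ := by
  intro s t hst
  refine (hR hst).mono (subtree_subset_of_joinedIn T ?_) (subtree_subset_of_joinedIn T ?_) <;>
  · rintro x ⟨rfl, hx⟩ y ⟨hxy, hy⟩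
    exact h x hx y hy hxy.symm

end Tree

/-- The leaf `p` hangs off the spine vertex `u (attach n p)`: through `v (attach n p)`, except
for `b 1` and `b n`, which are adjacent to `u 1` and `u (n - 1)` themselves. -/
def attach (n : ℕ) (p : Lbl) : ℕ :=
  cond p.1
    (if p.2 = 1 then 1 else if p.2 = n then n - 1
      else if p.2 % 2 = 0 then p.2 else p.2 - 1)
    (if p.2 % 2 = 1 then p.2 else p.2 - 1)

def Pendant (n : ℕ) (p : Lbl) : Prop := p ≠ b 1 ∧ p ≠ b n

theorem attach_le {n : ℕ} {p : Lbl} (hp : 1 ≤ p.2) : attach n p ≤ p.2 := by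
  obtain ⟨_ | _, i⟩ := p <;> simp only [attach, cond_false, cond_true] at hp ⊢ <;>
    split_ifs <;> omega

theorem le_attach_add_one {n : ℕ} {p : Lbl} (hp : 1 ≤ p.2) : p.2 ≤ attach n p + 1 := by
  obtain ⟨_ | _, i⟩ := p <;> simp only [attach, cond_false, cond_true] at hp ⊢ <;>
    split_ifs <;> omega

theorem attach_mem_Icc {n : ℕ} (hn : Even n) {p : Lbl} (hp : p ∈ Xset n) :
    attach n p ∈ Set.Icc 1 (n - 1) := by
  obtain ⟨_ | _, i⟩ := p <;> obtain ⟨h1, h2⟩ := hp <;> obtain ⟨k, rfl⟩ := hn <;>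
    simp only [attach, cond_false, cond_true, Set.mem_Icc] <;> split_ifs <;> omega

/-- `colU k` and `colV k` are the states given to `u k` and `v k`. -/
structure IsSpineColouring (n : ℕ) (χ : Lbl → ℕ) (colU colV : ℕ → ℕ) : Prop where
  ordConnected_colU : ∀ s, (colU ⁻¹' {s}).OrdConnected
  colV_eq : ∀ x ∈ Xset n, ∀ y ∈ Xset n, χ x = χ y → x ≠ y → Pendant n x →
    colV (attach n x) = χ x
  colU_eq : ∀ x ∈ Xset n, ∀ y ∈ Xset n, χ x = χ y → x ≠ y →
    (attach n x ≠ attach n y ∨ ¬ Pendant n x ∨ ¬ Pendant n y) → colU (attach n x) = χ x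

def colourClass {n : ℕ} (T : PhyloTree (Xset n)) (u v : ℕ → T.V) (χ : Lbl → ℕ)
    (colU colV : ℕ → ℕ) (s : ℕ) : Set T.V :=
  {w | (∃ p ∈ Xset n, χ p = s ∧ T.leaf p = w) ∨
    (∃ m, 1 ≤ m ∧ m ≤ n - 1 ∧ colU m = s ∧ u m = w) ∨
    (∃ m, 1 ≤ m ∧ m ≤ n - 1 ∧ colV m = s ∧ v m = w)}

namespace IsLobsterB

variable {n : ℕ} {T : PhyloTree (Xset n)} {u v : ℕ → T.V} (hB : IsLobsterB n T u v)
include hB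

theorem adj_of_spec {w w' : T.V} (h : AdjSpecB n T u v w w') : T.G.Adj w w' :=
  (hB.2.2.2 w w').mpr (Or.inl h)

theorem adj_u_succ {i : ℕ} (h1 : 1 ≤ i) (h2 : i + 1 ≤ n - 1) : T.G.Adj (u i) (u (i + 1)) :=
  hB.adj_of_spec (Or.inr (Or.inl ⟨i, h1, h2, rfl, rfl⟩))

theorem adj_u_v {i : ℕ} (h1 : 1 ≤ i) (h2 : i ≤ n - 1) : T.G.Adj (u i) (v i) :=
  hB.adj_of_spec (Or.inr (Or.inr (Or.inr (Or.inl ⟨i, h1, h2, rfl, rfl⟩))))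

theorem adj_v_leaf (hn : Even n) {p : Lbl} (hp : p ∈ Xset n) (hpend : Pendant n p) :
    T.G.Adj (v (attach n p)) (T.leaf p) := by
  obtain ⟨h1, h2⟩ := attach_mem_Icc hn hp
  obtain ⟨_ | _, i⟩ := p <;> obtain ⟨hi, -⟩ := hp
  · refine hB.adj_of_spec (Or.inr (Or.inr (Or.inr (Or.inr (Or.inl
      ⟨_, h1, h2, ?_, rfl, Or.imp (congrArg T.leaf) (congrArg T.leaf) ?_⟩)))))
    all_goals simp only [attach, a, cond_false, Prod.mk.injEq, true_and]; split_ifs <;> omega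
  · simp only [Pendant, b, ne_eq, Prod.mk.injEq, true_and] at hpend
    refine hB.adj_of_spec (Or.inr (Or.inr (Or.inr (Or.inr (Or.inr
      ⟨_, h1, h2, ?_, rfl, Or.imp (congrArg T.leaf) (congrArg T.leaf) ?_⟩)))))
    all_goals simp only [attach, b, cond_true, Prod.mk.injEq, true_and]; split_ifs <;> omega

theorem adj_leaf_u (hn : Even n) {p : Lbl} (hp : p ∈ Xset n) (hpend : ¬ Pendant n p) :
    T.G.Adj (T.leaf p) (u (attach n p)) := by
  rcases not_and_or.mp hpend with h | h <;> rw [not_not] at h <;> subst h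
  · exact hB.adj_of_spec (Or.inl ⟨rfl, rfl⟩)
  · have : attach n (b n) = n - 1 := by
      obtain ⟨k, rfl⟩ := hn
      simp only [attach, b, cond_true]; split_ifs <;> omega
    rw [this]
    exact (hB.adj_of_spec (Or.inr (Or.inr (Or.inl ⟨rfl, rfl⟩)))).symm

theorem joinedIn_spine {R : Set T.V} {i k : ℕ} (hi : 1 ≤ i) (hik : i ≤ k) (hk : k ≤ n - 1)
    (hR : ∀ m, i ≤ m → m ≤ k → u m ∈ R) : T.G.JoinedIn R (u i) (u k) := by
  induction k, hik using Nat.le_induction with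
  | base => exact .refl (hR i le_rfl le_rfl)
  | succ k hik ih =>
    exact (ih (by omega) fun m h1 h2 => hR m h1 (by omega)).trans
      (.of_adj (hB.adj_u_succ (by omega) hk) (hR k hik (by omega)) (hR _ (by omega) le_rfl))

theorem joinedIn_leaf_spine (hn : Even n) {R : Set T.V} {p : Lbl} (hp : p ∈ Xset n)
    (hpR : T.leaf p ∈ R) (huR : u (attach n p) ∈ R)
    (hvR : Pendant n p → v (attach n p) ∈ R) :
    T.G.JoinedIn R (T.leaf p) (u (attach n p)) := by
  obtain ⟨h1, h2⟩ := attach_mem_Icc hn hp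
  by_cases hpend : Pendant n p
  · exact (JoinedIn.of_adj (hB.adj_v_leaf hn hp hpend) (hvR hpend) hpR).symm.trans
      (JoinedIn.of_adj (hB.adj_u_v h1 h2) huR (hvR hpend)).symm
  · exact .of_adj (hB.adj_leaf_u hn hp hpend) hpR huR

theorem pairwise_disjoint_colourClass (χ : Lbl → ℕ) (colU colV : ℕ → ℕ) :
    Pairwise (Disjoint on colourClass T u v χ colU colV) := by
  obtain ⟨hinj, hleaf, -, -⟩ := hB
  intro s t hst
  refine Set.disjoint_left.mpr ?_
  rintro w (⟨p, hp, rfl, rfl⟩ | ⟨m, hm1, hm2, rfl, rfl⟩ | ⟨m, hm1, hm2, rfl, rfl⟩)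
    (⟨p', hp', rfl, hw⟩ | ⟨m', hm1', hm2', rfl, hw⟩ | ⟨m', hm1', hm2', rfl, hw⟩)
  · exact hst (congrArg χ (T.leaf_injOn hp hp' hw.symm))
  · exact (hleaf p hp m' hm1' hm2').1 hw.symm
  · exact (hleaf p hp m' hm1' hm2').2 hw.symm
  · exact (hleaf p' hp' m hm1 hm2).1 hw
  · exact hst (congrArg colU ((hinj m m' hm1 hm2 hm1' hm2').1 hw.symm))
  · exact (hinj m m' hm1 hm2 hm1' hm2').2.2 hw.symm
  · exact (hleaf p' hp' m hm1 hm2).2 hw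
  · exact (hinj m' m hm1' hm2' hm1 hm2).2.2 hw
  · exact hst (congrArg colV ((hinj m m' hm1 hm2 hm1' hm2').2.1 hw.symm))

variable {χ : Lbl → ℕ} {colU colV : ℕ → ℕ}

theorem joinedIn_of_attach_le (hn : Even n) (hc : IsSpineColouring n χ colU colV) {x y : Lbl}
    (hx : x ∈ Xset n) (hy : y ∈ Xset n) (hxy : χ x = χ y) (hne : x ≠ y)
    (hle : attach n x ≤ attach n y) :
    T.G.JoinedIn (colourClass T u v χ colU colV (χ x)) (T.leaf x) (T.leaf y) := by
  obtain ⟨hx1, hx2⟩ := attach_mem_Icc hn hx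
  obtain ⟨hy1, hy2⟩ := attach_mem_Icc hn hy
  have hxR : T.leaf x ∈ colourClass T u v χ colU colV (χ x) := Or.inl ⟨x, hx, rfl, rfl⟩
  have hyR : T.leaf y ∈ colourClass T u v χ colU colV (χ x) := Or.inl ⟨y, hy, hxy.symm, rfl⟩
  have hvx (h : Pendant n x) : v (attach n x) ∈ colourClass T u v χ colU colV (χ x) :=
    Or.inr (Or.inr ⟨_, hx1, hx2, hc.colV_eq x hx y hy hxy hne h, rfl⟩)
  have hvy (h : Pendant n y) : v (attach n y) ∈ colourClass T u v χ colU colV (χ x) :=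
    Or.inr (Or.inr
      ⟨_, hy1, hy2, (hc.colV_eq y hy x hx hxy.symm hne.symm h).trans hxy.symm, rfl⟩)
  by_cases hshared : attach n x = attach n y ∧ Pendant n x ∧ Pendant n y
  · obtain ⟨heq, hpx, hpy⟩ := hshared
    exact (JoinedIn.of_adj (hB.adj_v_leaf hn hx hpx) (hvx hpx) hxR).symm.trans
      (.of_adj (heq ▸ hB.adj_v_leaf hn hy hpy) (hvx hpx) hyR)
  · have hspine : attach n x ≠ attach n y ∨ ¬ Pendant n x ∨ ¬ Pendant n y := by tauto
    have hux : colU (attach n x) = χ x := hc.colU_eq x hx y hy hxy hne hspine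
    have huy : colU (attach n y) = χ x :=
      (hc.colU_eq y hy x hx hxy.symm hne.symm (by tauto)).trans hxy.symm
    have hu (k : ℕ) (h1 : attach n x ≤ k) (h2 : k ≤ attach n y) :
        u k ∈ colourClass T u v χ colU colV (χ x) :=
      Or.inr (Or.inl
        ⟨k, by omega, by omega, (hc.ordConnected_colU _).out hux huy ⟨h1, h2⟩, rfl⟩)
    exact (hB.joinedIn_leaf_spine hn hx hxR (hu _ le_rfl hle) hvx).trans
      ((hB.joinedIn_spine hx1 hle hy2 hu).trans
        (hB.joinedIn_leaf_spine hn hy hyR (hu _ hle le_rfl) hvy).symm)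

theorem displays_of_isSpineColouring (hn : Even n) (hc : IsSpineColouring n χ colU colV) :
    displays T χ := by
  refine displays_of_joinedIn T _ (hB.pairwise_disjoint_colourClass χ colU colV) ?_
  intro x hx y hy hxy
  obtain rfl | hne := eq_or_ne x y
  · exact .refl (Or.inl ⟨x, hx, rfl, rfl⟩)
  rcases le_total (attach n x) (attach n y) with hle | hle
  · exact hB.joinedIn_of_attach_le hn hc hx hy hxy hne hle
  · rw [hxy]
    exact (hB.joinedIn_of_attach_le hn hc hy hx hxy.symm hne.symm hle).symm

end IsLobsterB

theorem IsSpineColouring.of_eq_comp_attach {n : ℕ} {χ : Lbl → ℕ} {c : ℕ → ℕ}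
    (hc : Monotone c)
    (h : ∀ x ∈ Xset n, ∀ y ∈ Xset n, χ x = χ y → x ≠ y → χ x = c (attach n x)) :
    IsSpineColouring n χ c c where
  ordConnected_colU _ := Set.ordConnected_singleton.preimage_mono hc
  colV_eq x hx y hy hxy hne _ := (h x hx y hy hxy hne).symm
  colU_eq x hx y hy hxy hne _ := (h x hx y hy hxy hne).symm

theorem OmB_eq_ite_attach {n : ℕ} (hn : Even n) (hn4 : 4 ≤ n) {x : Lbl} (hx : x ∈ Xset n) :
    OmB n x = if attach n x + 2 ≤ n then 0 else 1 := by
  obtain ⟨m, rfl⟩ := hn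
  obtain ⟨_ | _, i⟩ := x <;> obtain ⟨hi, hin⟩ := hx <;>
    simp only [OmB, attach, cond_false, cond_true] at hi hin ⊢ <;> split_ifs <;> omega

theorem isSpineColouring_OmB {n : ℕ} (hn : Even n) (hn4 : 4 ≤ n) :
    IsSpineColouring n (OmB n) (fun k => if k + 2 ≤ n then 0 else 1)
      (fun k => if k + 2 ≤ n then 0 else 1) :=
  .of_eq_comp_attach (fun k l hkl => by split_ifs <;> omega)
    fun _ hx _ _ _ _ => OmB_eq_ite_attach hn hn4 hx

theorem phi_eq_zero_or_five {j : ℕ} {x y : Lbl} (h : phi j x = phi j y) (hne : x ≠ y) :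
    phi j x = 0 ∨ phi j x = 5 := by
  obtain ⟨_ | _, i⟩ := x <;> obtain ⟨_ | _, i'⟩ := y <;>
    simp only [phi, phiMain, phiSide, cond_false, cond_true, ne_eq, Prod.mk.injEq, true_and]
      at h hne ⊢ <;>
    split_ifs at h ⊢ <;> omega

theorem phi_eq_ite_attach {n j : ℕ} (hn : Even n) (hj : 3 ≤ j) {x : Lbl} (hx : x ∈ Xset n)
    (h : phi j x = 0 ∨ phi j x = 5) : phi j x = if attach n x + 2 ≤ j then 0 else 5 := by
  obtain ⟨m, rfl⟩ := hn
  obtain ⟨_ | _, i⟩ := x <;> obtain ⟨hi, hin⟩ := hx <;> obtain h | h := h <;>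
    simp only [phi, phiMain, phiSide, attach, cond_false, cond_true] at hi hin h ⊢ <;>
    split_ifs at h ⊢ <;> omega

theorem isSpineColouring_phi {n j : ℕ} (hn : Even n) (hj : 3 ≤ j) :
    IsSpineColouring n (phi j) (fun k => if k + 2 ≤ j then 0 else 5)
      (fun k => if k + 2 ≤ j then 0 else 5) :=
  .of_eq_comp_attach (fun k l hkl => by split_ifs <;> omega)
    fun _ hx _ _ hxy hne => phi_eq_ite_attach hn hj hx (phi_eq_zero_or_five hxy hne)

theorem chi_eq_chi_cases {j : ℕ} {x y : Lbl} (h : chi j x = chi j y) (hne : x ≠ y) :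
    (x.2 + 2 ≤ j ∧ chi j x = 0) ∨
    (x.1 = y.1 ∧ j ≤ x.2 ∧ x.2 ≤ j + 1 ∧ j ≤ y.2 ∧ y.2 ≤ j + 1 ∧ x.2 ≠ y.2 ∧
      chi j x = cond x.1 4 3) ∨
    (j + 3 ≤ x.2 ∧ chi j x = 7) := by
  obtain ⟨_ | _, i⟩ := x <;> obtain ⟨_ | _, i'⟩ := y <;>
    simp only [chi, cond_false, cond_true, ne_eq, Prod.mk.injEq, true_and] at h hne ⊢ <;>
    split_ifs at h ⊢ <;> omega

theorem isSpineColouring_chi {n j : ℕ} (hj : 2 ≤ j) (hjn : j + 2 ≤ n) :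
    IsSpineColouring n (chi j)
      (fun k => if k + 2 ≤ j then 0
        else if k ≤ j + 1 then (if j % 2 = 0 then 3 else 4) else 7)
      (fun k => if k + 2 ≤ j then 0 else if k + 1 = j then (if j % 2 = 0 then 3 else 4)
        else if k = j then (if j % 2 = 0 then 4 else 3)
        else if k = j + 1 then (if j % 2 = 0 then 3 else 4) else 7) := by
  refine ⟨fun _ => Set.ordConnected_singleton.preimage_mono
    fun k l hkl => by split_ifs <;> omega, ?_, ?_⟩ <;>
  · rintro x ⟨hx, -⟩ y ⟨hy, -⟩ hχ hne
    have hax₁ := attach_le (n := n) hx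
    have hax₂ := le_attach_add_one (n := n) hx
    rcases chi_eq_chi_cases hχ hne with
      ⟨hlow, hv⟩ | ⟨hxy, hx₁, hx₂, hy₁, hy₂, hxy₂, hv⟩ | ⟨hhigh, hv⟩ <;> rw [hv]
    · intro; rw [if_pos (by omega)]
    · obtain ⟨_ | _, i⟩ := x <;> obtain ⟨c, i'⟩ := y <;> subst hxy <;>
        simp only [attach, Pendant, b, cond_false, cond_true, ne_eq, Prod.mk.injEq] at * <;>
        split_ifs <;> omega
    · intro; split_ifs <;> omega

theorem lobsterB_compatible_C_minus_OmA (n : ℕ) (hn : Even n) (hn6 : 6 ≤ n)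
    (T : PhyloTree (Xset n)) (u v : ℕ → T.V) (hB : IsLobsterB n T u v) :
    displays T (OmB n) ∧
    (∀ j, 2 ≤ j → j ≤ n - 2 → displays T (chi j)) ∧
    (∀ j, 3 ≤ j → j ≤ n - 1 → displays T (phi j)) :=
  ⟨hB.displays_of_isSpineColouring hn (isSpineColouring_OmB hn (by omega)),
    fun _ hj hjn => hB.displays_of_isSpineColouring hn (isSpineColouring_chi hj (by omega)),
    fun _ hj _ => hB.displays_of_isSpineColouring hn (isSpineColouring_phi hn hj)⟩

end PP
end
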